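/- arXiv:2012.03941 — 6 statements merged into one kernel-verified Lean document; each statement's English description precedes it below -/
import Mathlib

section
/- Let X be a metric space, f: X → ℝ∪{+∞}, φ: ℝ → ℝ∪{+∞} nondecreasing, x ∈ dom f with f(x) ∈ dom φ, and φ differentiable at f(x) with φ'(f(x)) > 0. Then the slope of the composition satisfies |∇(φ∘f)|(x) = φ'(f(x))·|∇f|(x). -/
/-! With `a = f x` and `g t = φ a - φ (a - t)`, the numerator `[φ (f x) - φ (f u)]₊` of the
slope of `φ ∘ f` is `g` applied to the numerator `[f x - f u]₊` of the slope of `f`; `g` is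
nondecreasing on `[0, ∞)`, `g 0 = 0` and `g` has right derivative `d` at `0`. For a fixed `ε`,
`(d - ε) t ≤ g t ≤ (d + ε) t` on some `[0, δ]`. If `|∇f|(x) < ∞` the numerator of `f` tends to `0`,
so eventually only this range matters, giving `≤`. For `≥`, points with numerator above `δ` still
contribute at least `(d - ε) δ / d(u, x) → ∞`, so truncating the slope of `f` at `δ / d(u, x)`
does not change its limsup. -/

open Filter EMetric Set Topology
open scoped ENNReal NNReal

noncomputable def epos (a : EReal) : ℝ≥0∞ := if a = ⊤ then ⊤ else ENNReal.ofReal a.toReal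

noncomputable def nslope {X : Type*} [MetricSpace X] (f : X → EReal) (x : X) : ℝ≥0∞ :=
  ⨆ u ∈ {u : X | u ≠ x}, epos (f x - max (f u) 0) / edist u x

noncomputable def lslope {X : Type*} [MetricSpace X] (f : X → EReal) (x : X) : ℝ≥0∞ :=
  Filter.limsup (fun u => epos (f x - f u) / edist u x) (𝓝[≠] x)

namespace ENNReal

theorem le_ofReal_mul_of_forall_le_ofReal_add_mul {a b : ℝ≥0∞} {d : ℝ} (hd : 0 < d)
    (h : ∀ ε > 0, a ≤ ENNReal.ofReal (d + ε) * b) : a ≤ ENNReal.ofReal d * b := by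
  have hlim : Tendsto (fun ε => ENNReal.ofReal (d + ε) * b) (𝓝[>] 0)
      (𝓝 (ENNReal.ofReal d * b)) :=
    ENNReal.Tendsto.mul_const
      (((ENNReal.continuous_ofReal.comp (continuous_const_add d)).tendsto' 0 _
        (by simp)).mono_left nhdsWithin_le_nhds)
      (Or.inl (ENNReal.ofReal_pos.2 hd).ne')
  exact ge_of_tendsto hlim (eventually_nhdsWithin_of_forall h)

theorem ofReal_mul_le_of_forall_ofReal_sub_mul_le {a b : ℝ≥0∞} {d : ℝ} (hd : 0 < d)
    (h : ∀ ε ∈ Ioo 0 d, ENNReal.ofReal (d - ε) * b ≤ a) : ENNReal.ofReal d * b ≤ a := by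
  have hlim : Tendsto (fun ε => ENNReal.ofReal (d - ε) * b) (𝓝[>] 0)
      (𝓝 (ENNReal.ofReal d * b)) :=
    ENNReal.Tendsto.mul_const
      (((ENNReal.continuous_ofReal.comp (continuous_const.sub continuous_id)).tendsto' 0 _
        (by simp)).mono_left nhdsWithin_le_nhds)
      (Or.inl (ENNReal.ofReal_pos.2 hd).ne')
  exact le_of_tendsto hlim (mem_of_superset (Ioo_mem_nhdsGT hd) h)

theorem ofReal_mul_ofReal_div {c : ℝ} (t : ℝ) (e : ℝ≥0∞) (hc : 0 ≤ c) :
    ENNReal.ofReal c * (ENNReal.ofReal t / e) = ENNReal.ofReal (c * t) / e := by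
  rw [← mul_div_assoc, ← ENNReal.ofReal_mul hc]

end ENNReal

theorem Filter.limsup_min_eq_of_tendsto_top {α : Type*} {l : Filter α} {F G : α → ℝ≥0∞}
    (hG : Tendsto G l (𝓝 ⊤)) : limsup (fun u => min (F u) (G u)) l = limsup F l := by
  refine le_antisymm (limsup_le_limsup (.of_forall fun u => min_le_left _ _)) ?_
  refine le_of_forall_lt_imp_le_of_dense fun c hc => le_limsup_of_frequently_le ?_
  have hcG : ∀ᶠ u in l, c < G u := hG.eventually (lt_mem_nhds (hc.trans_le le_top))
  exact ((frequently_lt_of_lt_limsup (by isBoundedDefault) hc).and_eventually hcG).mono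
    fun u h => le_min h.1.le h.2.le

theorem HasDerivWithinAt.eventually_sub_mul_le_and_le_add_mul {g : ℝ → ℝ} {d : ℝ}
    (hg : HasDerivWithinAt g d (Ici 0) 0) (hg0 : g 0 = 0) {ε : ℝ} (hε : 0 < ε) :
    ∀ᶠ t in 𝓝[≥] 0, (d - ε) * t ≤ g t ∧ g t ≤ (d + ε) * t := by
  filter_upwards [(hasDerivWithinAt_iff_isLittleO.1 hg).def hε, self_mem_nhdsWithin]
    with t ht (ht0 : 0 ≤ t)
  simp only [hg0, sub_zero, smul_eq_mul, Real.norm_eq_abs, abs_of_nonneg ht0, abs_le] at ht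
  constructor <;> nlinarith

section RatioLimsup

variable {α : Type*} {l : Filter α} {e : α → ℝ≥0∞}

theorem tendsto_nhds_zero_of_limsup_div_ne_top {F : α → ℝ≥0∞} (he : Tendsto e l (𝓝 0))
    (h : limsup (fun u => F u / e u) l ≠ ⊤) : Tendsto F l (𝓝 0) := by
  set C := limsup (fun u => F u / e u) l + 1
  have hC : C ≠ ⊤ := ENNReal.add_ne_top.2 ⟨h, ENNReal.one_ne_top⟩
  have hbound : ∀ᶠ u in l, F u ≤ C * e u := by
    filter_upwards [eventually_lt_of_limsup_lt (ENNReal.lt_add_right h one_ne_zero)] with u hu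
    exact (ENNReal.div_le_iff_le_mul (.inr hC) (.inr (by simp [C]))).1 hu.le
  have hCe : Tendsto (fun u => C * e u) l (𝓝 0) := by
    simpa using ENNReal.Tendsto.const_mul he (.inr hC)
  exact tendsto_of_tendsto_of_tendsto_of_le_of_le' tendsto_const_nhds hCe
    (.of_forall fun _ => zero_le) hbound

variable {p : α → ℝ} {g : ℝ → ℝ} {d : ℝ}

theorem limsup_ofReal_comp_div_le (hp : ∀ u, 0 ≤ p u) (hg0 : g 0 = 0)
    (hg : HasDerivWithinAt g d (Ici 0) 0) (hd : 0 < d) (he : Tendsto e l (𝓝 0)) :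
    limsup (fun u => ENNReal.ofReal (g (p u)) / e u) l ≤
      ENNReal.ofReal d * limsup (fun u => ENNReal.ofReal (p u) / e u) l := by
  set S := limsup (fun u => ENNReal.ofReal (p u) / e u) l
  rcases eq_or_ne S ⊤ with hS | hS
  · simp [hS, ENNReal.mul_top (ENNReal.ofReal_pos.2 hd).ne']
  have hp0 : Tendsto p l (𝓝[≥] 0) := by
    refine tendsto_nhdsWithin_iff.2 ⟨?_, .of_forall hp⟩
    have := (ENNReal.tendsto_toReal ENNReal.zero_ne_top).comp
      (tendsto_nhds_zero_of_limsup_div_ne_top he hS)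
    simpa [Function.comp_def, ENNReal.toReal_ofReal (hp _)] using this
  refine ENNReal.le_ofReal_mul_of_forall_le_ofReal_add_mul hd fun ε hε => ?_
  calc limsup (fun u => ENNReal.ofReal (g (p u)) / e u) l
      ≤ limsup (fun u => ENNReal.ofReal (d + ε) * (ENNReal.ofReal (p u) / e u)) l := by
        refine limsup_le_limsup ?_
        filter_upwards [hp0.eventually (hg.eventually_sub_mul_le_and_le_add_mul hg0 hε)]
          with u hu
        rw [ENNReal.ofReal_mul_ofReal_div _ _ (by linarith)]
        gcongr
        exact hu.2
    _ = ENNReal.ofReal (d + ε) * S := ENNReal.limsup_const_mul_of_ne_top ENNReal.ofReal_ne_top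

theorem le_limsup_ofReal_comp_div (hp : ∀ u, 0 ≤ p u) (hg0 : g 0 = 0)
    (hmono : MonotoneOn g (Ici 0)) (hg : HasDerivWithinAt g d (Ici 0) 0) (hd : 0 < d)
    (he : Tendsto e l (𝓝 0)) :
    ENNReal.ofReal d * limsup (fun u => ENNReal.ofReal (p u) / e u) l ≤
      limsup (fun u => ENNReal.ofReal (g (p u)) / e u) l := by
  refine ENNReal.ofReal_mul_le_of_forall_ofReal_sub_mul_le hd fun ε hε => ?_
  obtain ⟨δ, hδ, hδg⟩ := mem_nhdsGE_iff_exists_Icc_subset.1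
    (hg.eventually_sub_mul_le_and_le_add_mul hg0 hε.1)
  have hcε : 0 ≤ d - ε := by linarith [hε.2]
  have hδe : Tendsto (fun u => ENNReal.ofReal δ / e u) l (𝓝 ⊤) := by
    simpa [ENNReal.div_zero (ENNReal.ofReal_pos.2 hδ).ne'] using
      ENNReal.Tendsto.const_div (a := ENNReal.ofReal δ) he (.inl ENNReal.zero_ne_top)
  have hpt : ∀ u, ENNReal.ofReal (d - ε) * min (ENNReal.ofReal (p u) / e u)
      (ENNReal.ofReal δ / e u) ≤ ENNReal.ofReal (g (p u)) / e u := by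
    intro u
    rcases le_or_gt (p u) δ with hpδ | hδp
    · calc _ ≤ ENNReal.ofReal (d - ε) * (ENNReal.ofReal (p u) / e u) := by
            gcongr; exact min_le_left _ _
        _ = ENNReal.ofReal ((d - ε) * p u) / e u := ENNReal.ofReal_mul_ofReal_div _ _ hcε
        _ ≤ _ := by gcongr; exact (hδg ⟨hp u, hpδ⟩).1
    · calc _ ≤ ENNReal.ofReal (d - ε) * (ENNReal.ofReal δ / e u) := by
            gcongr; exact min_le_right _ _
        _ = ENNReal.ofReal ((d - ε) * δ) / e u := ENNReal.ofReal_mul_ofReal_div _ _ hcε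
        _ ≤ ENNReal.ofReal (g δ) / e u := by gcongr; exact (hδg ⟨hδ.le, le_rfl⟩).1
        _ ≤ _ := by gcongr; exact hmono (mem_Ici.2 hδ.le) (mem_Ici.2 (hp u)) hδp.le
  calc ENNReal.ofReal (d - ε) * limsup (fun u => ENNReal.ofReal (p u) / e u) l
      = ENNReal.ofReal (d - ε) * limsup (fun u => min (ENNReal.ofReal (p u) / e u)
          (ENNReal.ofReal δ / e u)) l := by
        rw [limsup_min_eq_of_tendsto_top hδe]
    _ = limsup (fun u => ENNReal.ofReal (d - ε) * min (ENNReal.ofReal (p u) / e u)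
          (ENNReal.ofReal δ / e u)) l :=
        (ENNReal.limsup_const_mul_of_ne_top ENNReal.ofReal_ne_top).symm
    _ ≤ _ := limsup_le_limsup (.of_forall hpt)

theorem limsup_ofReal_comp_div_eq (hp : ∀ u, 0 ≤ p u) (hg0 : g 0 = 0)
    (hmono : MonotoneOn g (Ici 0)) (hg : HasDerivWithinAt g d (Ici 0) 0) (hd : 0 < d)
    (he : Tendsto e l (𝓝 0)) :
    limsup (fun u => ENNReal.ofReal (g (p u)) / e u) l =
      ENNReal.ofReal d * limsup (fun u => ENNReal.ofReal (p u) / e u) l :=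
  le_antisymm (limsup_ofReal_comp_div_le hp hg0 hg hd he)
    (le_limsup_ofReal_comp_div hp hg0 hmono hg hd he)

end RatioLimsup

theorem epos_coe (r : ℝ) : epos r = ENNReal.ofReal r := by
  simp [epos]

theorem epos_of_nonpos {y : EReal} (hy : y ≤ 0) : epos y = 0 := by
  have : y ≠ ⊤ := by rintro rfl; simp at hy
  simp [epos, this, EReal.toReal_nonpos hy]

theorem epos_sub_comp {φ : ℝ → EReal} (hmono : Monotone φ) (hbot : ∀ t, φ t ≠ ⊥) {a : ℝ}
    (ha : φ a ≠ ⊤) {s : EReal} (hs : s ≠ ⊥) :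
    epos (φ a - if s = ⊤ then ⊤ else φ s.toReal) =
      ENNReal.ofReal ((φ a).toReal - (φ (a - (epos (a - s)).toReal)).toReal) := by
  induction s using EReal.rec with
  | bot => exact absurd rfl hs
  | top => simp [epos]
  | coe r =>
    rw [if_neg (EReal.coe_ne_top r), EReal.toReal_coe]
    rcases le_or_gt r a with hra | har
    · have hr : φ r ≠ ⊤ := ne_top_of_le_ne_top ha (hmono hra)
      have hpr : (epos ((a : EReal) - r)).toReal = a - r := by
        rw [← EReal.coe_sub, epos_coe, ENNReal.toReal_ofReal (sub_nonneg.2 hra)]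
      rw [hpr, sub_sub_cancel, ← EReal.coe_toReal ha (hbot a), ← EReal.coe_toReal hr (hbot r),
        ← EReal.coe_sub, epos_coe, EReal.toReal_coe, EReal.toReal_coe]
    · rw [epos_of_nonpos, epos_of_nonpos]
      · simp
      · exact EReal.sub_nonpos.2 (EReal.coe_le_coe_iff.2 har.le)
      · exact EReal.sub_nonpos.2 (hmono har.le)

theorem epos_coe_sub_ne_top (a : ℝ) {s : EReal} (hs : s ≠ ⊥) : epos (a - s) ≠ ⊤ := by
  induction s using EReal.rec with
  | bot => exact absurd rfl hs
  | top => simp [epos]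
  | coe r => simp [← EReal.coe_sub, epos_coe]

theorem hasDerivAt_toReal_sub_comp_sub {φ : ℝ → EReal} {ψ : ℝ → ℝ} {a d : ℝ}
    (hψ : ∀ᶠ t in 𝓝 a, φ t = ψ t) (hder : HasDerivAt ψ d a) :
    HasDerivAt (fun t => (φ a).toReal - (φ (a - t)).toReal) d 0 := by
  have hsub : HasDerivAt (fun t => a - t) (-1) 0 := (hasDerivAt_id 0).const_sub a
  have hψsub : HasDerivAt (fun t => ψ a - ψ (a - t)) d 0 := by
    simpa using ((by simpa using hder : HasDerivAt ψ d (a - 0)).comp 0 hsub).const_sub (ψ a)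
  refine hψsub.congr_of_eventuallyEq ?_
  filter_upwards [hsub.continuousAt.tendsto.eventually (by simpa using hψ)] with t ht
  simp [hψ.self_of_nhds, ht]

theorem monotoneOn_toReal_sub_comp_sub {φ : ℝ → EReal} (hmono : Monotone φ)
    (hbot : ∀ t, φ t ≠ ⊥) {a : ℝ} (ha : φ a ≠ ⊤) :
    MonotoneOn (fun t => (φ a).toReal - (φ (a - t)).toReal) (Ici 0) := fun s hs t _ hst =>
  sub_le_sub_left (EReal.toReal_le_toReal (hmono (by linarith)) (hbot _)
    (ne_top_of_le_ne_top ha (hmono (by linarith [mem_Ici.1 hs])))) _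

theorem slope_comp_general {X : Type*} [MetricSpace X] (f : X → EReal) (hbot : ∀ u, f u ≠ ⊥)
    (x : X) (hdom : f x ≠ ⊤)
    (φ : ℝ → EReal) (hφmono : Monotone φ) (hφbot : ∀ t, φ t ≠ ⊥)
    (ψ : ℝ → ℝ) (d : ℝ) (hψ : ∀ᶠ t in nhds (f x).toReal, φ t = (ψ t : EReal))
    (hder : HasDerivAt ψ d (f x).toReal) (hd : 0 < d) :
    lslope (fun u => if f u = ⊤ then (⊤ : EReal) else φ ((f u).toReal)) x =
      ENNReal.ofReal d * lslope f x := by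
  obtain ⟨a, hfx⟩ : ∃ a : ℝ, f x = a := ⟨_, (EReal.coe_toReal hdom (hbot x)).symm⟩
  rw [hfx, EReal.toReal_coe] at hψ hder
  have hφa : φ a ≠ ⊤ := hψ.self_of_nhds ▸ EReal.coe_ne_top _
  have hedist : Tendsto (fun u => edist u x) (𝓝[≠] x) (𝓝 0) :=
    ((continuous_id.edist continuous_const).tendsto' x 0 (edist_self x)).mono_left
      nhdsWithin_le_nhds
  have hF : (fun u => epos (a - f u) / edist u x) =
      fun u => ENNReal.ofReal (epos (a - f u)).toReal / edist u x := by
    funext u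
    rw [ENNReal.ofReal_toReal (epos_coe_sub_ne_top a (hbot u))]
  unfold lslope
  simp only [hfx, EReal.coe_ne_top, if_false, EReal.toReal_coe,
    epos_sub_comp hφmono hφbot hφa (hbot _), hF]
  exact limsup_ofReal_comp_div_eq (g := fun t => (φ a).toReal - (φ (a - t)).toReal)
    (p := fun u => (epos (a - f u)).toReal) (fun _ => ENNReal.toReal_nonneg) (by simp)
    (monotoneOn_toReal_sub_comp_sub hφmono hφbot hφa)
    (hasDerivAt_toReal_sub_comp_sub hψ hder).hasDerivWithinAt hd hedist

/-- chain rule for slopes, `|∇(φ∘f)|(x) = φ'(f(x))·|∇f|(x)`, for a nondecreasing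
function `φ : ℝ → ℝ∪{+∞}` which is finite and differentiable at `f(x)` with positive derivative
(differentiability of the extended-real-valued `φ` at `f(x)` is expressed via a real-valued
local representative `ψ`). -/
theorem slope_comp {X : Type*} [MetricSpace X] (f : X → EReal) (hbot : ∀ u, f u ≠ ⊥)
    (x : X) (hdom : f x ≠ ⊤)
    (φ : ℝ → EReal) (hφmono : Monotone φ) (hφbot : ∀ t, φ t ≠ ⊥)
    (hφdom : φ (f x).toReal ≠ ⊤)
    (ψ : ℝ → ℝ) (d : ℝ) (hψ : ∀ᶠ t in nhds (f x).toReal, φ t = (ψ t : EReal))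
    (hder : HasDerivAt ψ d (f x).toReal) (hd : 0 < d) :
    lslope (fun u => if f u = ⊤ then (⊤ : EReal) else φ ((f u).toReal)) x =
      ENNReal.ofReal d * lslope f x :=
  slope_comp_general f hbot x hdom φ hφmono hφbot ψ d hψ hder hd
end

section
/- Let X be a normed space, f: X → ℝ∪{+∞}, φ: ℝ → ℝ nondecreasing and differentiable at f(x) with φ'(f(x)) > 0, where x ∈ dom f. Then the Fréchet subdifferential satisfies the chain rule ∂^F(φ∘f)(x) = φ'(f(x))·∂^F f(x). -/
open Filter EMetric Set Topology
open scoped ENNReal NNReal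

/-- Fréchet subdifferential of an extended-real-valued function. -/
def FSubdiff {X : Type*} [NormedAddCommGroup X] [NormedSpace ℝ X] (f : X → EReal) (x : X) :
    Set (X →L[ℝ] ℝ) :=
  {p | (0 : EReal) ≤
    Filter.liminf (fun u => (f u - f x - ((p (u - x) : ℝ) : EReal)) / ((‖u - x‖ : ℝ) : EReal))
      (nhdsWithin x {x}ᶜ)}

set_option maxHeartbeats 1000000

/-- Quantitative two-sided derivative estimate. -/
lemma deriv_est {φ : ℝ → ℝ} {d r : ℝ} (hder : HasDerivAt φ d r) {η : ℝ} (hη : 0 < η) :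
    ∃ δ > 0, ∀ t : ℝ, |t - r| < δ → |φ t - φ r - d * (t - r)| ≤ η * |t - r| := by
  have h := hasDerivAt_iff_tendsto_slope.mp hder
  have h2 : ∀ᶠ t in 𝓝[≠] r, |slope φ r t - d| < η := by
    have := Metric.tendsto_nhds.mp h η hη
    simpa [Real.dist_eq] using this
  rw [eventually_nhdsWithin_iff, Metric.eventually_nhds_iff] at h2
  obtain ⟨δ, hδ, hδ'⟩ := h2
  refine ⟨δ, hδ, fun t ht => ?_⟩
  rcases eq_or_ne t r with rfl | hne
  · simp
  · have h3 := hδ' (by simpa [Real.dist_eq] using ht) hne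
    have hne' : t - r ≠ 0 := sub_ne_zero.mpr hne
    have hs : slope φ r t - d = (φ t - φ r - d * (t - r)) / (t - r) := by
      rw [slope_def_field]; field_simp
    rw [hs, abs_div] at h3
    have habs : 0 < |t - r| := abs_pos.mpr hne'
    have := (div_lt_iff₀ habs).mp h3
    linarith

/-- Real characterization of Fréchet subdifferential membership. -/
lemma mem_FSubdiff_iff {X : Type*} [NormedAddCommGroup X] [NormedSpace ℝ X]
    (f : X → EReal) (hbot : ∀ u, f u ≠ ⊥) (x : X) (hdom : f x ≠ ⊤) (p : X →L[ℝ] ℝ) :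
    p ∈ FSubdiff f x ↔ ∀ ε : ℝ, 0 < ε →
      ∀ᶠ u in 𝓝[≠] x,
        (((f x).toReal + p (u - x) - ε * ‖u - x‖ : ℝ) : EReal) < f u := by
  have hfx : (((f x).toReal : ℝ) : EReal) = f x := EReal.coe_toReal hdom (hbot x)
  constructor
  · intro h ε hε
    have hlt : ((-ε : ℝ) : EReal) < (0 : EReal) := by exact_mod_cast neg_lt_zero.mpr hε
    have h2 := Filter.eventually_lt_of_lt_liminf (lt_of_lt_of_le hlt h)
    filter_upwards [h2, self_mem_nhdsWithin] with u hu hux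
    have hux' : u ≠ x := hux
    have hn : 0 < ‖u - x‖ := by
      rw [norm_pos_iff]; exact sub_ne_zero.mpr hux'
    rcases eq_or_ne (f u) ⊤ with htop | htop
    · rw [htop]; exact EReal.coe_lt_top _
    · have hfu : (((f u).toReal : ℝ) : EReal) = f u := EReal.coe_toReal htop (hbot u)
      rw [← hfu, ← hfx, ← EReal.coe_sub, ← EReal.coe_sub, ← EReal.coe_div,
        EReal.coe_lt_coe_iff] at hu
      rw [← hfu, EReal.coe_lt_coe_iff]
      have := (lt_div_iff₀ hn).mp hu
      linarith
  · intro h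
    by_contra hcon
    rw [FSubdiff, Set.mem_setOf_eq, not_le] at hcon
    obtain ⟨c, hc1, hc2⟩ := EReal.exists_between_coe_real hcon
    have hcneg : c < 0 := by exact_mod_cast hc2
    have hε : 0 < -c := by linarith
    have h2 := h (-c) hε
    have h3 : (c : EReal) ≤ Filter.liminf
        (fun u => (f u - f x - ((p (u - x) : ℝ) : EReal)) / ((‖u - x‖ : ℝ) : EReal))
        (nhdsWithin x {x}ᶜ) := by
      apply Filter.le_liminf_of_le (by isBoundedDefault)
      filter_upwards [h2, self_mem_nhdsWithin] with u hu hux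
      have hux' : u ≠ x := hux
      have hn : 0 < ‖u - x‖ := by
        rw [norm_pos_iff]; exact sub_ne_zero.mpr hux'
      rcases eq_or_ne (f u) ⊤ with htop | htop
      · rw [htop, ← hfx, EReal.top_sub_coe, EReal.top_sub_coe,
          EReal.top_div_of_pos_ne_top (by exact_mod_cast hn) (EReal.coe_ne_top _)]
        exact le_top
      · have hfu : (((f u).toReal : ℝ) : EReal) = f u := EReal.coe_toReal htop (hbot u)
        rw [← hfu, EReal.coe_lt_coe_iff] at hu
        rw [← hfu, ← hfx, ← EReal.coe_sub, ← EReal.coe_sub, ← EReal.coe_div,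
          EReal.coe_le_coe_iff]
        rw [le_div_iff₀ hn]
        linarith only [hu]
    exact absurd h3 hc1.not_ge

/-- Key equivalence between subdifferential inequalities for `φ ∘ f` and `f`. -/
lemma key_iff {X : Type*} [NormedAddCommGroup X] [NormedSpace ℝ X]
    (f : X → EReal) (hbot : ∀ u, f u ≠ ⊥) (x : X)
    (φ : ℝ → ℝ) (d : ℝ) (hφmono : Monotone φ)
    (hder : HasDerivAt φ d (f x).toReal) (hd : 0 < d) (q : X →L[ℝ] ℝ) :
    (∀ ε : ℝ, 0 < ε → ∀ᶠ u in 𝓝[≠] x,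
        ((φ (f x).toReal + d * q (u - x) - ε * ‖u - x‖ : ℝ) : EReal) <
          (if f u = ⊤ then (⊤ : EReal) else ((φ ((f u).toReal)) : EReal))) ↔
    (∀ ε : ℝ, 0 < ε → ∀ᶠ u in 𝓝[≠] x,
        (((f x).toReal + q (u - x) - ε * ‖u - x‖ : ℝ) : EReal) < f u) := by
  set r := (f x).toReal with hr
  set M := ‖q‖ + 1 with hMdef
  clear_value r M
  have hM : 0 < M := by rw [hMdef]; positivity
  have hM1 : 1 ≤ M := by rw [hMdef]; linarith [norm_nonneg q]
  have hqv : ∀ u : X, |q (u - x)| ≤ M * ‖u - x‖ := by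
    intro u
    calc |q (u - x)| ≤ ‖q‖ * ‖u - x‖ := q.le_opNorm _
    _ ≤ M * ‖u - x‖ := by
        apply mul_le_mul_of_nonneg_right _ (norm_nonneg _)
        rw [hMdef]; linarith
  have hsmall : ∀ ρ : ℝ, 0 < ρ → ∀ᶠ u in 𝓝[≠] x, ‖u - x‖ < ρ := by
    intro ρ hρ
    have hcont : Tendsto (fun u : X => ‖u - x‖) (𝓝[≠] x) (𝓝 0) := by
      have : Tendsto (fun u : X => ‖u - x‖) (𝓝 x) (𝓝 ‖x - x‖) :=
        ((continuous_id.sub continuous_const).norm).tendsto x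
      simpa using this.mono_left nhdsWithin_le_nhds
    exact hcont.eventually_lt_const hρ
  constructor
  · -- φ-condition implies f-condition
    intro hp ε hε
    set ε' := ε * d / 4 with hε'def
    clear_value ε'
    have hε' : 0 < ε' := by rw [hε'def]; positivity
    set η := min (d / 2) (ε * d / (2 * (ε + 4 * M + 1))) with hηdef
    clear_value η
    have hη : 0 < η := by
      rw [hηdef]; apply lt_min (by linarith); positivity
    have hηd : η ≤ d / 2 := by rw [hηdef]; exact min_le_left _ _
    have hη2 : η * (2 * (ε + 4 * M + 1)) ≤ ε * d := by
      have h1 : η ≤ ε * d / (2 * (ε + 4 * M + 1)) := by rw [hηdef]; exact min_le_right _ _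
      have h2 : (0 : ℝ) < 2 * (ε + 4 * M + 1) := by positivity
      calc η * (2 * (ε + 4 * M + 1)) ≤ ε * d / (2 * (ε + 4 * M + 1)) * (2 * (ε + 4 * M + 1)) :=
            mul_le_mul_of_nonneg_right h1 h2.le
      _ = ε * d := by field_simp
    obtain ⟨δ, hδ, hD⟩ := deriv_est hder hη
    set δ' := δ / 2 with hδ'def
    clear_value δ'
    have hδ' : 0 < δ' := by rw [hδ'def]; positivity
    have hδδ : δ' < δ := by rw [hδ'def]; linarith
    set ρ := min ((d / 2) * δ' / (d * M + ε' + 1)) (δ' / (M + 1)) with hρdef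
    clear_value ρ
    have hρ : 0 < ρ := by
      rw [hρdef]; apply lt_min <;> positivity
    filter_upwards [hp ε' hε', hsmall ρ hρ, self_mem_nhdsWithin] with u h1 h2 hux
    have hux' : u ≠ x := hux
    have hn : 0 < ‖u - x‖ := by rw [norm_pos_iff]; exact sub_ne_zero.mpr hux'
    set n := ‖u - x‖ with hndef
    set qv := q (u - x) with hqvdef
    clear_value n qv
    have hqvu : |qv| ≤ M * n := by rw [hqvdef, hndef]; exact hqv u
    have hqvu1 : qv ≤ M * n := le_trans (le_abs_self _) hqvu
    have hqvu2 : -(M * n) ≤ qv := neg_le_of_abs_le hqvu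
    have hn1 : n < (d / 2) * δ' / (d * M + ε' + 1) :=
      lt_of_lt_of_le h2 (hρdef ▸ min_le_left _ _)
    have hn2 : n < δ' / (M + 1) := lt_of_lt_of_le h2 (hρdef ▸ min_le_right _ _)
    have hn1' : n * (d * M + ε' + 1) < (d / 2) * δ' :=
      (lt_div_iff₀ (by positivity)).mp hn1
    have hn2' : n * (M + 1) < δ' := (lt_div_iff₀ (by positivity)).mp hn2
    have hε'n : ε' * n = ε * d / 4 * n := by rw [hε'def]
    have hk4 := mul_le_mul_of_nonneg_right hη2 hn.le
    have hk2 : (0 : ℝ) ≤ η * (ε * n) := by positivity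
    have hk3 : (0 : ℝ) ≤ η * n := by positivity
    have hedn : (0 : ℝ) ≤ ε * d * n := by positivity
    rcases eq_or_ne (f u) ⊤ with htop | htop
    · rw [htop]; exact EReal.coe_lt_top _
    · rw [if_neg htop] at h1
      have hfu : (((f u).toReal : ℝ) : EReal) = f u := EReal.coe_toReal htop (hbot u)
      rw [EReal.coe_lt_coe_iff] at h1
      set t := (f u).toReal with htdef
      clear_value t
      rw [← hfu, EReal.coe_lt_coe_iff]
      -- h1 : φ r + d * qv - ε' * n < φ t ; goal : r + qv - ε * n < t
      -- Step 1 : t ≥ r - δ'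
      have hge : r - δ' ≤ t := by
        by_contra hcon
        push_neg at hcon
        have hmono := hφmono hcon.le
        have hdd : |(r - δ') - r| < δ := by
          rw [show (r - δ') - r = -δ' by ring, abs_neg, abs_of_pos hδ']
          exact hδδ
        have hD1 := hD (r - δ') hdd
        rw [show (r - δ') - r = -δ' by ring] at hD1
        have habs := abs_le.mp hD1
        rw [abs_neg, abs_of_pos hδ'] at habs
        have hdqv := mul_le_mul_of_nonneg_left hqvu2 hd.le
        have hηδ' := mul_le_mul_of_nonneg_right hηd hδ'.le
        linarith only [habs.2, hmono, hdqv, hηδ', h1, hn1', hn, hδ']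
      rcases le_or_gt t (r + δ') with hA | hA
      · have hB : |t - r| < δ :=
          abs_lt.mpr ⟨by linarith only [hge, hδδ], by linarith only [hA, hδδ]⟩
        have hD1 := hD t hB
        rcases le_or_gt r t with hC | hC
        · -- r ≤ t ≤ r + δ'
          rw [abs_of_nonneg (by linarith only [hC] : (0:ℝ) ≤ t - r)] at hD1
          have habs2 := abs_le.mp hD1
          have hup : φ t - φ r ≤ d * (t - r) + η * (t - r) := by linarith only [habs2.2]
          have hk1 : η * qv ≤ η * (M * n) := mul_le_mul_of_nonneg_left hqvu1 hη.le
          have hkey : (d + η) * (qv - ε * n) ≤ d * qv - ε' * n := by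
            linarith only [hk1, hk2, hk3, hk4, hε'n, hedn]
          have hlt : (d + η) * (qv - ε * n) < (d + η) * (t - r) := by
            apply lt_of_le_of_lt hkey
            linarith only [hup, h1]
          have := (mul_lt_mul_iff_right₀ (by linarith only [hd, hη] : (0:ℝ) < d + η)).mp hlt
          linarith only [this]
        · -- r - δ' ≤ t < r
          rw [abs_of_neg (by linarith only [hC] : t - r < 0)] at hD1
          have habs2 := abs_le.mp hD1
          have hup : φ t - φ r ≤ d * (t - r) + η * (r - t) := by linarith only [habs2.2]
          have hdqv := mul_le_mul_of_nonneg_left hqvu2 hd.le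
          have hnn : (0 : ℝ) ≤ (d / 2 - η) * (r - t) :=
            mul_nonneg (by linarith only [hηd]) (by linarith only [hC])
          have hs1 : (d / 2) * (r - t) < (ε' + d * M) * n := by
            linarith only [h1, hup, hdqv, hnn]
          have hsC : r - t < (ε / 2 + 2 * M) * n := by
            have h5 : (d / 2) * (r - t) < (d / 2) * ((ε / 2 + 2 * M) * n) := by
              linarith only [hs1, hε'n]
            exact (mul_lt_mul_iff_right₀ (by linarith only [hd] : (0:ℝ) < d / 2)).mp h5
          have hk1 : η * (r - t) ≤ η * ((ε / 2 + 2 * M) * n) :=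
            mul_le_mul_of_nonneg_left hsC.le hη.le
          have hfin : d * (qv - ε * n) < d * (t - r) := by
            linarith only [h1, hup, hk1, hk2, hk3, hk4, hε'n, hedn]
          have := (mul_lt_mul_iff_right₀ hd).mp hfin
          linarith only [this]
      · -- t > r + δ'
        have hqd : qv < δ' := by linarith only [hqvu1, hn2', hn]
        linarith only [hqd, hA, mul_pos hε hn]
  · -- f-condition implies φ-condition
    intro hq ε hε
    set ε₁ := min 1 (ε / (2 * (d + 1))) with hε₁def
    clear_value ε₁
    have hε₁ : 0 < ε₁ := by
      rw [hε₁def]; apply lt_min one_pos; positivity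
    have hε₁1 : ε₁ ≤ 1 := by rw [hε₁def]; exact min_le_left _ _
    have hdε₁ : d * ε₁ < ε / 2 := by
      have h1 : ε₁ ≤ ε / (2 * (d + 1)) := by rw [hε₁def]; exact min_le_right _ _
      have h2 : d * (ε / (2 * (d + 1))) < ε / 2 := by
        rw [← mul_div_assoc, div_lt_div_iff₀ (by positivity) (by norm_num : (0:ℝ) < 2)]
        linarith only [hε, mul_pos hε hd]
      calc d * ε₁ ≤ d * (ε / (2 * (d + 1))) := mul_le_mul_of_nonneg_left h1 hd.le
      _ < ε / 2 := h2
    set η := min (d / 2) (ε / (2 * (M + 1))) with hηdef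
    clear_value η
    have hη : 0 < η := by rw [hηdef]; exact lt_min (by linarith) (by positivity)
    have hηd : η ≤ d / 2 := by rw [hηdef]; exact min_le_left _ _
    have hηM : η * (M + 1) ≤ ε / 2 := by
      have h1 : η ≤ ε / (2 * (M + 1)) := by rw [hηdef]; exact min_le_right _ _
      calc η * (M + 1) ≤ ε / (2 * (M + 1)) * (M + 1) := mul_le_mul_of_nonneg_right h1 (by linarith)
      _ = ε / 2 := by field_simp
    obtain ⟨δ, hδ, hD⟩ := deriv_est hder hη
    set δ' := δ / 2 with hδ'def
    clear_value δ'
    have hδ' : 0 < δ' := by rw [hδ'def]; positivity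
    have hδδ : δ' < δ := by rw [hδ'def]; linarith
    set ρ := min (δ' / (M + 1)) ((d - η) * δ' / (d * M + 1)) with hρdef
    clear_value ρ
    have hdη : 0 < d - η := by linarith
    have hρ : 0 < ρ := by
      rw [hρdef]; apply lt_min (by positivity); positivity
    filter_upwards [hq ε₁ hε₁, hsmall ρ hρ, self_mem_nhdsWithin] with u h1 h2 hux
    have hux' : u ≠ x := hux
    have hn : 0 < ‖u - x‖ := by rw [norm_pos_iff]; exact sub_ne_zero.mpr hux'
    set n := ‖u - x‖ with hndef
    set qv := q (u - x) with hqvdef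
    clear_value n qv
    have hqvu : |qv| ≤ M * n := by rw [hqvdef, hndef]; exact hqv u
    have hqvu1 : qv ≤ M * n := le_trans (le_abs_self _) hqvu
    have hqvu2 : -(M * n) ≤ qv := neg_le_of_abs_le hqvu
    have hn1 : n < δ' / (M + 1) := lt_of_lt_of_le h2 (hρdef ▸ min_le_left _ _)
    have hn2 : n < (d - η) * δ' / (d * M + 1) :=
      lt_of_lt_of_le h2 (hρdef ▸ min_le_right _ _)
    have hn1' : n * (M + 1) < δ' := (lt_div_iff₀ (by positivity)).mp hn1
    have hn2' : n * (d * M + 1) < (d - η) * δ' := (lt_div_iff₀ (by positivity)).mp hn2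
    have hε₁n : ε₁ * n ≤ n := by
      calc ε₁ * n ≤ 1 * n := mul_le_mul_of_nonneg_right hε₁1 hn.le
      _ = n := one_mul n
    have hk3 := mul_le_mul_of_nonneg_right hηM hn.le
    have hk4 := mul_lt_mul_of_pos_right hdε₁ hn
    have hηn : (0 : ℝ) ≤ η * n := by positivity
    rcases eq_or_ne (f u) ⊤ with htop | htop
    · rw [if_pos htop]; exact EReal.coe_lt_top _
    · rw [if_neg htop]
      have hfu : (((f u).toReal : ℝ) : EReal) = f u := EReal.coe_toReal htop (hbot u)
      rw [← hfu, EReal.coe_lt_coe_iff] at h1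
      set t := (f u).toReal with htdef
      clear_value t
      rw [EReal.coe_lt_coe_iff]
      -- h1 : r + qv - ε₁ * n < t ; goal : φ r + d * qv - ε * n < φ t
      rcases le_or_gt t (r + δ') with hA | hA
      · have hge : r - δ' < t := by linarith only [h1, hqvu2, hn1', hε₁n]
        have hB : |t - r| < δ :=
          abs_lt.mpr ⟨by linarith only [hge, hδδ], by linarith only [hA, hδδ]⟩
        have hD1 := hD t hB
        rcases le_or_gt r t with hC | hC
        · -- r ≤ t ≤ r + δ'
          rw [abs_of_nonneg (by linarith only [hC] : (0:ℝ) ≤ t - r)] at hD1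
          have habs := abs_le.mp hD1
          have hlow : (d - η) * (t - r) ≤ φ t - φ r := by linarith only [habs.1]
          rcases le_or_gt qv (ε₁ * n) with hE | hE
          · have h0 : 0 ≤ (d - η) * (t - r) := mul_nonneg hdη.le (by linarith only [hC])
            have hk : d * qv ≤ d * (ε₁ * n) := mul_le_mul_of_nonneg_left hE hd.le
            linarith only [hlow, h0, hk, hk4, mul_pos hε hn]
          · have hk1 : (d - η) * (qv - ε₁ * n) < (d - η) * (t - r) :=
              mul_lt_mul_of_pos_left (by linarith only [h1]) hdη
            have hk2 : η * qv ≤ η * (M * n) := mul_le_mul_of_nonneg_left hqvu1 hη.le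
            have hk5 : (0 : ℝ) ≤ η * (ε₁ * n) := by positivity
            linarith only [hlow, hk1, hk2, hk3, hk4, hk5, hηn]
        · -- r - δ' < t < r
          rw [abs_of_neg (by linarith only [hC] : t - r < 0)] at hD1
          have habs := abs_le.mp hD1
          have hrt : r - t < (M + ε₁) * n := by linarith only [h1, hqvu2]
          have hlow : d * (t - r) - η * (r - t) ≤ φ t - φ r := by linarith only [habs.1]
          have hk0 : d * (qv - ε₁ * n) < d * (t - r) :=
            mul_lt_mul_of_pos_left (by linarith only [h1]) hd
          have hk2 : η * (r - t) ≤ η * ((M + ε₁) * n) :=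
            mul_le_mul_of_nonneg_left hrt.le hη.le
          have hk5 : η * ((M + ε₁) * n) ≤ η * ((M + 1) * n) := by
            apply mul_le_mul_of_nonneg_left _ hη.le
            linarith only [hε₁n]
          linarith only [hlow, hk0, hk2, hk3, hk4, hk5]
      · -- t > r + δ'
        have hdd : |(r + δ') - r| < δ := by
          rw [show (r + δ') - r = δ' by ring, abs_of_pos hδ']
          exact hδδ
        have hD1 := hD (r + δ') hdd
        rw [show (r + δ') - r = δ' by ring, abs_of_pos hδ'] at hD1
        have habs := abs_le.mp hD1
        have hmono := hφmono hA.le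
        have hdqv : d * qv ≤ d * (M * n) := mul_le_mul_of_nonneg_left hqvu1 hd.le
        linarith only [habs.1, hmono, hdqv, hn2', mul_pos hε hn, hn]

/-- chain rule for the Fréchet subdifferential,
`∂^F(φ∘f)(x) = φ'(f(x))·∂^F f(x)`, for a nondecreasing `φ : ℝ → ℝ` differentiable at `f(x)`
with positive derivative `d = φ'(f(x))`. -/
theorem FSubdiff_comp {X : Type*} [NormedAddCommGroup X] [NormedSpace ℝ X]
    (f : X → EReal) (hbot : ∀ u, f u ≠ ⊥) (x : X) (hdom : f x ≠ ⊤)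
    (φ : ℝ → ℝ) (d : ℝ) (hφmono : Monotone φ)
    (hder : HasDerivAt φ d (f x).toReal) (hd : 0 < d) :
    FSubdiff (fun u => if f u = ⊤ then (⊤ : EReal) else ((φ ((f u).toReal)) : EReal)) x =
      (fun p => d • p) '' FSubdiff f x := by
  classical
  set g : X → EReal := fun u => if f u = ⊤ then (⊤ : EReal) else ((φ ((f u).toReal)) : EReal)
    with hg
  have hgbot : ∀ u, g u ≠ ⊥ := by
    intro u; by_cases h : f u = ⊤ <;> simp [hg, h]
  have hgdom : g x ≠ ⊤ := by simp [hg, hdom]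
  have hgx : (g x).toReal = φ (f x).toReal := by simp [hg, hdom]
  have hiff : ∀ p : X →L[ℝ] ℝ, p ∈ FSubdiff g x ↔ ∀ ε : ℝ, 0 < ε →
      ∀ᶠ u in 𝓝[≠] x,
        ((φ (f x).toReal + p (u - x) - ε * ‖u - x‖ : ℝ) : EReal) < g u := by
    intro p
    rw [mem_FSubdiff_iff g hgbot x hgdom p, hgx]
  ext p
  constructor
  · intro hp
    refine ⟨d⁻¹ • p, ?_, ?_⟩
    · rw [mem_FSubdiff_iff f hbot x hdom]
      apply (key_iff f hbot x φ d hφmono hder hd (d⁻¹ • p)).mp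
      intro ε hε
      have h := (hiff p).mp hp ε hε
      refine h.mono fun u hu => ?_
      have heq : d * ((d⁻¹ • p) (u - x)) = p (u - x) := by
        rw [ContinuousLinearMap.smul_apply, smul_eq_mul, ← mul_assoc,
          mul_inv_cancel₀ hd.ne', one_mul]
      rw [heq]
      exact hu
    · ext v
      simp [smul_smul, mul_inv_cancel₀ hd.ne']
  · rintro ⟨q, hq, rfl⟩
    apply (hiff (d • q)).mpr
    intro ε hε
    have h := (key_iff f hbot x φ d hφmono hder hd q).mpr
      ((mem_FSubdiff_iff f hbot x hdom q).mp hq) ε hε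
    refine h.mono fun u hu => ?_
    have heq : (d • q) (u - x) = d * q (u - x) := by
      rw [ContinuousLinearMap.smul_apply, smul_eq_mul]
    rw [heq]
    exact hu
end

section
/- Let X be a complete metric space, f: X → ℝ∪{+∞} lower semicontinuous, x ∈ X with f(x) > 0, τ > 0, α ∈ ]0,1]. Assume that for every u ∈ X satisfying f(u) ≤ f(x), d(u,x) < α·d(x,[f≤0]), α·f(u) < τ·d(u,[f≤0]), and f(u) < τ·d(x,[f≤0]), one has α·|∇f|⋄(u) ≥ τ. Then τ·d(x,[f≤0]) ≤ f(x). -/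
open Filter EMetric Set Topology
open scoped ENNReal NNReal

/-!
Suppose `f x < τ·d(x,[f≤0])` and pick `K` with `α·K < τ` and still `f x < α·K·d(x,[f≤0])`.
Ekeland's variational principle for `f₊` at `x` with constant `K` gives a point `u` with
`K·d(u,x) ≤ f₊(x)`, hence `d(u,x) < α·d(x,[f≤0])` and in particular `f(u) > 0`, and with
`f₊(u) < f₊(v) + K·d(v,u)` for all `v ≠ u`. Tested against `v ∈ [f≤0]` this gives
`f(u) ≤ K·d(u,[f≤0])`, and against all `v` it gives `|∇f|⋄(u) ≤ K`. So `u` satisfies every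
hypothesis, while `α·|∇f|⋄(u) ≤ α·K < τ`.
-/

namespace ENNReal

theorem exists_mem_forall_le_add {α : Type*} {s : Set α} (hs : s.Nonempty) (g : α → ℝ≥0∞)
    {ε : ℝ≥0∞} (hε : ε ≠ 0) : ∃ v ∈ s, ∀ w ∈ s, g v ≤ g w + ε := by
  by_cases htop : ⨅ w ∈ s, g w = ∞
  · obtain ⟨v, hv⟩ := hs
    refine ⟨v, hv, fun w hw => ?_⟩
    rw [(iInf₂_eq_top.1 htop) w hw, top_add]
    exact le_top
  · obtain ⟨v, hv, hlt⟩ := by simpa only [iInf_lt_iff] using ENNReal.lt_add_right htop hε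
    exact ⟨v, hv, fun w hw => hlt.le.trans (add_le_add_left (iInf₂_le w hw) ε)⟩

theorem exists_mul_lt_of_lt_mul {a b d k : ℝ≥0∞} (hk0 : k ≠ 0) (hk : k ≠ ∞) (h : a < b * d) :
    ∃ K ≠ 0, K ≠ ∞ ∧ k * K < b ∧ a < K * (k * d) := by
  have hd : d ≠ 0 := by rintro rfl; simp at h
  have hdiv : ∀ {c}, a / d < c ↔ a < c * d := ENNReal.div_lt_iff (Or.inl hd) (Or.inr h.ne_top)
  obtain ⟨c, hac, hcb⟩ := exists_between (hdiv.2 h)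
  have hkc : k * (c / k) = c := ENNReal.mul_div_cancel hk0 hk
  refine ⟨c / k, ?_, ENNReal.div_ne_top hcb.ne_top hk0, hkc.trans_lt hcb, ?_⟩
  · exact (ENNReal.div_pos (zero_le.trans_lt hac).ne' hk).ne'
  · rw [mul_left_comm, ← mul_assoc, hkc]
    exact hdiv.1 hac

theorem lt_mul_of_le_mul_of_lt {a c d e : ℝ≥0∞} (ha0 : a ≠ 0) (ha : a ≠ ∞)
    (h : a ≤ c * d) (hce : c < e) : a < e * d := by
  rcases eq_or_ne d ∞ with rfl | hd
  · rw [ENNReal.mul_top (zero_le.trans_lt hce).ne']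
    exact ha.lt_top
  have hd0 : d ≠ 0 := by rintro rfl; simp_all
  exact h.trans_lt ((ENNReal.mul_lt_mul_iff_left hd0 hd).2 hce)

end ENNReal

section Ekeland

variable {X : Type*}

def ekelandCone [EDist X] (g : X → ℝ≥0∞) (K : ℝ≥0∞) (w : X) : Set X :=
  {v | g v + K * edist v w ≤ g w}

section PseudoEMetricSpace

variable [PseudoEMetricSpace X] {g : X → ℝ≥0∞} {K : ℝ≥0∞} {v w w₀ : X}

theorem self_mem_ekelandCone : w ∈ ekelandCone g K w := by
  simp [ekelandCone]

theorem le_of_mem_ekelandCone (hv : v ∈ ekelandCone g K w) : g v ≤ g w :=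
  le_self_add.trans hv

theorem ekelandCone_subset (hv : v ∈ ekelandCone g K w) :
    ekelandCone g K v ⊆ ekelandCone g K w := fun v' hv' =>
  calc g v' + K * edist v' w ≤ g v' + (K * edist v' v + K * edist v w) := by
        gcongr; rw [← mul_add]; gcongr; exact edist_triangle _ _ _
    _ = (g v' + K * edist v' v) + K * edist v w := (add_assoc _ _ _).symm
    _ ≤ g v + K * edist v w := by gcongr; exact hv'
    _ ≤ g w := hv

theorem isClosed_ekelandCone (hg : LowerSemicontinuous g) (hK : K ≠ ∞) :
    IsClosed (ekelandCone g K w) :=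
  (hg.add ((ENNReal.continuous_const_mul hK).comp
    (continuous_id.edist continuous_const)).lowerSemicontinuous).isClosed_preimage (g w)

theorem edist_lt_of_mem_ekelandCone {r : ℝ≥0∞} (hv : v ∈ ekelandCone g K w)
    (hw : g w < K * r) : edist v w < r :=
  lt_of_mul_lt_mul_left' ((le_add_self.trans hv).trans_lt hw)

theorem mul_edist_le_of_mem_ekelandCone {ε : ℝ≥0∞} (hw : w ∈ ekelandCone g K w₀)
    (hmin : ∀ v' ∈ ekelandCone g K w₀, g w ≤ g v' + ε) (hgw : g w ≠ ∞)
    (hv : v ∈ ekelandCone g K w) : K * edist v w ≤ ε := by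
  have hgv : g v ≠ ∞ := ne_top_of_le_ne_top hgw (le_of_mem_ekelandCone hv)
  exact ENNReal.le_of_add_le_add_left hgv (hv.trans (hmin v (ekelandCone_subset hw hv)))

end PseudoEMetricSpace

theorem ekeland_variational_principle [EMetricSpace X] [CompleteSpace X] {g : X → ℝ≥0∞}
    (hg : LowerSemicontinuous g) {K : ℝ≥0∞} (hK0 : K ≠ 0) (hK : K ≠ ∞) {x : X} (hx : g x ≠ ∞) :
    ∃ u ∈ ekelandCone g K x, ∀ v ≠ u, g u < g v + K * edist v u := by
  have hε : ∀ n : ℕ, K * 2⁻¹ ^ n ≠ 0 := fun n => mul_ne_zero hK0 (by simp)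
  -- `u (n + 1)` is a `K·2⁻ⁿ`-minimizer of `g` on the cone of `u n`, so the nested cones
  -- shrink to a single point, which is the Ekeland point.
  choose next hnext_mem hnext_min using fun (n : ℕ) (w : X) =>
    ENNReal.exists_mem_forall_le_add (⟨w, self_mem_ekelandCone⟩ : (ekelandCone g K w).Nonempty)
      g (hε n)
  let u : ℕ → X := fun n => Nat.rec x next n
  have hanti : Antitone fun n => ekelandCone g K (u n) :=
    antitone_nat_of_succ_le fun n => ekelandCone_subset (hnext_mem n (u n))
  have hfin : ∀ n, g (u n) ≠ ∞ := fun n =>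
    ne_top_of_le_ne_top hx (le_of_mem_ekelandCone (hanti (Nat.zero_le n) self_mem_ekelandCone))
  have hclose : ∀ n, ∀ v ∈ ekelandCone g K (u (n + 1)), edist v (u (n + 1)) ≤ 2⁻¹ ^ n :=
    fun n v hv => (ENNReal.mul_le_mul_iff_right hK0 hK).1 <|
      mul_edist_le_of_mem_ekelandCone (hnext_mem n (u n)) (hnext_min n (u n)) (hfin (n + 1)) hv
  have hcauchy : CauchySeq fun n => u (n + 1) :=
    cauchySeq_of_edist_le_geometric_two 1 ENNReal.one_ne_top fun n => by
      rw [edist_comm, one_div, ENNReal.inv_pow]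
      exact hclose n _ (hnext_mem _ _)
  obtain ⟨y, hy⟩ := cauchySeq_tendsto_of_complete hcauchy
  have hy_mem : ∀ n, y ∈ ekelandCone g K (u n) := fun n =>
    (isClosed_ekelandCone hg hK).mem_of_tendsto hy <| eventually_atTop.2
      ⟨n, fun m hm => hanti (hm.trans m.le_succ) self_mem_ekelandCone⟩
  refine ⟨y, hy_mem 0, fun v hvy => lt_of_not_ge fun hv => hvy ?_⟩
  have hv_lim : Tendsto (fun n => u (n + 1)) atTop (𝓝 v) := by
    rw [tendsto_iff_edist_tendsto_0]
    refine tendsto_of_tendsto_of_tendsto_of_le_of_le tendsto_const_nhds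
      (ENNReal.tendsto_pow_atTop_nhds_zero_of_lt_one (ENNReal.inv_lt_one.2 ENNReal.one_lt_two))
      (fun _ => zero_le) fun n => ?_
    rw [edist_comm]
    exact hclose n v (ekelandCone_subset (hy_mem (n + 1)) hv)
  exact tendsto_nhds_unique hv_lim hy

end Ekeland

theorem le_mul_infEDist {X : Type*} [PseudoEMetricSpace X] {a K : ℝ≥0∞} (hK0 : K ≠ 0)
    (hK : K ≠ ∞) {u : X} {s : Set X} (h : ∀ v ∈ s, a ≤ K * edist u v) :
    a ≤ K * Metric.infEDist u s := by
  simp_rw [Metric.infEDist, ENNReal.mul_iInf_of_ne hK0 hK]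
  exact le_iInf₂ h

theorem notMem_of_edist_lt_infEDist {X : Type*} [PseudoEMetricSpace X] {x y : X} {s : Set X}
    (h : edist y x < Metric.infEDist x s) : y ∉ s := fun hy =>
  h.not_ge ((Metric.infEDist_le_edist_of_mem hy).trans_eq (edist_comm x y))

theorem EReal.coe_mul_coe_ennreal {α : ℝ} (hα : 0 ≤ α) (a : ℝ≥0∞) :
    (α : EReal) * a = ((ENNReal.ofReal α * a : ℝ≥0∞) : EReal) := by
  rw [EReal.coe_ennreal_mul, EReal.coe_ennreal_ofReal, max_eq_left hα]

theorem epos_sub_max_zero (a b : EReal) : epos (a - max b 0) = a.toENNReal - b.toENNReal := by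
  have hb : (max b 0).toENNReal = b.toENNReal := by
    rcases le_total b 0 with hb | hb
    · rw [max_eq_right hb, EReal.toENNReal_zero, EReal.toENNReal_of_nonpos hb]
    · rw [max_eq_left hb]
  rw [← hb]
  -- `epos` is `EReal.toENNReal` by definition
  exact EReal.toENNReal_sub (le_max_right b 0)

theorem nslope_le_of_forall_le_add {X : Type*} [MetricSpace X] {f : X → EReal} {u : X}
    {K : ℝ≥0∞} (h : ∀ v ≠ u, (f u).toENNReal ≤ (f v).toENNReal + K * edist v u) :
    nslope f u ≤ K := by
  refine iSup₂_le fun v (hv : v ≠ u) => ?_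
  rw [epos_sub_max_zero, ENNReal.div_le_iff_le_mul (Or.inl (edist_pos.2 hv).ne')
    (Or.inl (edist_ne_top v u)), tsub_le_iff_left]
  exact h v hv

theorem toENNReal_le_mul_infEDist_of_forall_le_add {X : Type*} [MetricSpace X] {f : X → EReal}
    {u : X} {K : ℝ≥0∞} (hK0 : K ≠ 0) (hK : K ≠ ∞)
    (h : ∀ v ≠ u, (f u).toENNReal ≤ (f v).toENNReal + K * edist v u) :
    (f u).toENNReal ≤ K * Metric.infEDist u {v | f v ≤ 0} := by
  refine le_mul_infEDist hK0 hK fun v (hv : f v ≤ 0) => ?_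
  rcases eq_or_ne v u with rfl | hvu
  · simp [EReal.toENNReal_of_nonpos hv]
  · simpa [EReal.toENNReal_of_nonpos hv, edist_comm] using h v hvu

theorem coe_mul_lt_mul_infEDist_of_forall_le_add {X : Type*} [MetricSpace X] {f : X → EReal}
    {u : X} {K τ : ℝ≥0∞} {α : ℝ} (hα : 0 < α) (hK0 : K ≠ 0) (hK : K ≠ ∞)
    (hKτ : ENNReal.ofReal α * K < τ) (hu_pos : 0 < f u) (hu_top : f u ≠ ⊤)
    (h : ∀ v ≠ u, (f u).toENNReal ≤ (f v).toENNReal + K * edist v u) :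
    (α : EReal) * f u < ((τ * Metric.infEDist u {v | f v ≤ 0} : ℝ≥0∞) : EReal) := by
  rw [← EReal.coe_toENNReal hu_pos.le, EReal.coe_mul_coe_ennreal hα.le,
    EReal.coe_ennreal_lt_coe_ennreal_iff]
  refine ENNReal.lt_mul_of_le_mul_of_lt ?_ ?_ ?_ hKτ
  · exact mul_ne_zero (ENNReal.ofReal_pos.2 hα).ne' (EReal.toENNReal_ne_zero_iff.2 hu_pos)
  · exact ENNReal.mul_ne_top ENNReal.ofReal_ne_top (EReal.toENNReal_ne_top_iff.2 hu_top)
  · rw [mul_assoc]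
    gcongr
    exact toENNReal_le_mul_infEDist_of_forall_le_add hK0 hK h

theorem error_bound_at_point_general {X : Type*} [MetricSpace X] [CompleteSpace X]
    (f : X → EReal) (hlsc : LowerSemicontinuous f)
    (x : X) (hpos : 0 < f x) (τ α : ℝ) (hα : α ∈ Set.Ioc (0 : ℝ) 1)
    (h : ∀ u : X, f u ≤ f x →
      edist u x < ENNReal.ofReal α * EMetric.infEdist x {v | f v ≤ 0} →
      (α : EReal) * f u <
        ((ENNReal.ofReal τ * EMetric.infEdist u {v | f v ≤ 0} : ℝ≥0∞) : EReal) →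
      f u < ((ENNReal.ofReal τ * EMetric.infEdist x {v | f v ≤ 0} : ℝ≥0∞) : EReal) →
      ENNReal.ofReal τ ≤ ENNReal.ofReal α * nslope f u) :
    ((ENNReal.ofReal τ * EMetric.infEdist x {v | f v ≤ 0} : ℝ≥0∞) : EReal) ≤ f x := by
  set S := {v | f v ≤ 0}
  set g : X → ℝ≥0∞ := fun v => (f v).toENNReal
  have hgx : (g x : EReal) = f x := EReal.coe_toENNReal hpos.le
  by_contra! hlt
  rw [← hgx, EReal.coe_ennreal_lt_coe_ennreal_iff] at hlt
  have hα0 : ENNReal.ofReal α ≠ 0 := (ENNReal.ofReal_pos.2 hα.1).ne'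
  obtain ⟨K, hK0, hK, hKτ, hxK⟩ := ENNReal.exists_mul_lt_of_lt_mul hα0 ENNReal.ofReal_ne_top hlt
  have hg : LowerSemicontinuous g := EReal.continuous_toENNReal.comp_lowerSemicontinuous hlsc
    fun _ _ => EReal.toENNReal_le_toENNReal
  obtain ⟨u, hux, hu⟩ := ekeland_variational_principle hg hK0 hK hlt.ne_top
  have hu_le : ∀ v ≠ u, g u ≤ g v + K * edist v u := fun v hv => (hu v hv).le
  have hdist : edist u x < ENNReal.ofReal α * Metric.infEDist x S :=
    edist_lt_of_mem_ekelandCone hux hxK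
  have hu_pos : 0 < f u := lt_of_not_ge <| notMem_of_edist_lt_infEDist (s := S) <|
    hdist.trans_le (mul_le_of_le_one_left' (ENNReal.ofReal_le_one.2 hα.2))
  have hfu_le : f u ≤ f x := by
    rw [← EReal.coe_toENNReal hu_pos.le, ← hgx]
    exact EReal.coe_ennreal_le_coe_ennreal_iff.2 (le_of_mem_ekelandCone hux : g u ≤ g x)
  have hfu_lt : f u < ((ENNReal.ofReal τ * Metric.infEDist x S : ℝ≥0∞) : EReal) :=
    hfu_le.trans_lt (hgx ▸ EReal.coe_ennreal_lt_coe_ennreal_iff.2 hlt)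
  have hαfu := coe_mul_lt_mul_infEDist_of_forall_le_add hα.1 hK0 hK hKτ hu_pos
    (hfu_lt.trans_le le_top).ne hu_le
  refine (h u hfu_le hdist hαfu hfu_lt).not_gt ?_
  calc ENNReal.ofReal α * nslope f u ≤ ENNReal.ofReal α * K := by
        gcongr; exact nslope_le_of_forall_le_add hu_le
    _ < ENNReal.ofReal τ := hKτ

/-- Proposition 2.1(i) with the nonlocal lslope: the sufficient condition at a fixed
point `x` with `f(x) > 0` yields the error bound inequality `τ·d(x,[f≤0]) ≤ f(x)`. -/
theorem error_bound_at_point {X : Type*} [MetricSpace X] [CompleteSpace X]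
    (f : X → EReal) (hbot : ∀ u, f u ≠ ⊥) (hlsc : LowerSemicontinuous f)
    (x : X) (hpos : 0 < f x) (τ α : ℝ) (hτ : 0 < τ) (hα : α ∈ Set.Ioc (0 : ℝ) 1)
    (h : ∀ u : X, f u ≤ f x →
      edist u x < ENNReal.ofReal α * EMetric.infEdist x {v | f v ≤ 0} →
      (α : EReal) * f u <
        ((ENNReal.ofReal τ * EMetric.infEdist u {v | f v ≤ 0} : ℝ≥0∞) : EReal) →
      f u < ((ENNReal.ofReal τ * EMetric.infEdist x {v | f v ≤ 0} : ℝ≥0∞) : EReal) →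
      ENNReal.ofReal τ ≤ ENNReal.ofReal α * nslope f u) :
    ((ENNReal.ofReal τ * EMetric.infEdist x {v | f v ≤ 0} : ℝ≥0∞) : EReal) ≤ f x :=
  error_bound_at_point_general f hlsc x hpos τ α hα h
end

section
/- Let X be a complete metric space, f: X → ℝ∪{+∞} lower semicontinuous, x̄ ∈ [f≤0], τ > 0, δ ∈ ]0,+∞], μ ∈ ]0,+∞], and α ∈ ]0,1]. If α·|∇f|⋄(u) ≥ τ for all u ∈ B_δ(x̄) with 0 < f(u) < μ satisfying max{α,1-α}·f(u) < τ·d(u,[f≤0]), then τ·d(x,[f≤0]) ≤ f(x) for all x ∈ B_{δ/(1+α)}(x̄) with 0 < f(x) < μ. -/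
/-!
Suppose `f x = ε < τ d(x, [f ≤ 0])` at some `x` of the smaller ball, and pick `λ` with
`α ε / τ < λ < α d(x, [f ≤ 0])`. Ekeland's variational principle for `f₊` at `x` with constant
`ε / λ` gives a point `u` with `f₊ u + (ε / λ) d(u, x) ≤ ε` at which `|∇f|⋄(u) ≤ ε / λ`.
Then `d(u, x) ≤ λ < d(x, [f ≤ 0])` keeps `u` outside `[f ≤ 0]`, and inside `B_δ(x̄)` because
`(1 + α) d(x, x̄) < δ`; the sharper `d(u, x) ≤ λ (ε - f u) / ε` gives
`max{α, 1 - α} f u ≤ f u < τ d(u, [f ≤ 0])`. So the hypothesis applies at `u`, and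
`τ ≤ α |∇f|⋄(u) ≤ α ε / λ < τ`.
-/

open Filter EMetric Set Topology
open scoped ENNReal NNReal

lemma Set.Nonempty.exists_forall_le_add {α : Type*} {s : Set α} (hs : s.Nonempty) (F : α → ℝ≥0∞)
    {η : ℝ≥0∞} (hη : η ≠ 0) : ∃ w ∈ s, ∀ v ∈ s, F w ≤ F v + η := by
  by_cases hI : ⨅ v ∈ s, F v = ⊤
  · obtain ⟨w, hw⟩ := hs
    refine ⟨w, hw, fun v hv => ?_⟩
    simp [top_unique (hI ▸ iInf₂_le v hv)]
  · obtain ⟨w, hw, hlt⟩ : ∃ w ∈ s, F w < (⨅ v ∈ s, F v) + η := by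
      simpa [iInf_lt_iff] using ENNReal.lt_add_right hI hη
    exact ⟨w, hw, fun v hv => hlt.le.trans (by gcongr; exact iInf₂_le v hv)⟩

section Ekeland

variable {X : Type*} [PseudoEMetricSpace X] {F : X → ℝ≥0∞} {c : ℝ≥0∞}

/-- `v ∈ ekelandSet F c w` is Brøndsted's order `v ≼ w`; Ekeland's principle produces a
`≼`-minimal point below the initial one. -/
def ekelandSet (F : X → ℝ≥0∞) (c : ℝ≥0∞) (w : X) : Set X :=
  {v | F v + c * edist v w ≤ F w}

lemma self_mem_ekelandSet (w : X) : w ∈ ekelandSet F c w := by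
  simp [ekelandSet]

lemma le_of_mem_ekelandSet {v w : X} (hv : v ∈ ekelandSet F c w) : F v ≤ F w :=
  le_self_add.trans hv

lemma ekelandSet_subset {w z : X} (hw : w ∈ ekelandSet F c z) :
    ekelandSet F c w ⊆ ekelandSet F c z := fun v hv =>
  calc F v + c * edist v z ≤ F v + c * edist v w + c * edist w z := by
        rw [add_assoc, ← mul_add]; gcongr; exact edist_triangle v w z
    _ ≤ F w + c * edist w z := by gcongr; exact hv
    _ ≤ F z := hw

lemma isClosed_ekelandSet (hF : LowerSemicontinuous F) (hc : c ≠ ⊤) (w : X) :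
    IsClosed (ekelandSet F c w) :=
  (hF.add ((ENNReal.continuous_const_mul hc).comp
    (continuous_id.edist continuous_const)).lowerSemicontinuous).isClosed_preimage (F w)

lemma mul_edist_le_of_mem_ekelandSet {v w : X} {η : ℝ≥0∞} (hv : v ∈ ekelandSet F c w)
    (hFv : F v ≠ ⊤) (hw : F w ≤ F v + η) : c * edist v w ≤ η :=
  (ENNReal.add_le_add_iff_left hFv).1 (hv.trans hw)

lemma ediam_ekelandSet_le (hc0 : c ≠ 0) (hc : c ≠ ⊤) {w z : X} {η : ℝ≥0∞} (hFw : F w ≠ ⊤)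
    (hw : w ∈ ekelandSet F c z) (hmin : ∀ v ∈ ekelandSet F c z, F w ≤ F v + η) :
    Metric.ediam (ekelandSet F c w) ≤ 2 * η / c := by
  have hrad : ∀ v ∈ ekelandSet F c w, c * edist v w ≤ η := fun v hv =>
    mul_edist_le_of_mem_ekelandSet hv (ne_top_of_le_ne_top hFw (le_of_mem_ekelandSet hv))
      (hmin v (ekelandSet_subset hw hv))
  refine Metric.ediam_le fun v hv v' hv' => ?_
  rw [ENNReal.le_div_iff_mul_le (Or.inl hc0) (Or.inl hc), mul_comm, two_mul]
  calc c * edist v v' ≤ c * edist v w + c * edist v' w := by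
        rw [← mul_add]; gcongr; exact edist_triangle_right _ _ _
    _ ≤ η + η := add_le_add (hrad v hv) (hrad v' hv')

lemma exists_forall_mem_of_antitone_of_tendsto_ediam [CompleteSpace X] {s : ℕ → Set X}
    (hs : ∀ n, IsClosed (s n)) (hanti : Antitone s) (hne : ∀ n, (s n).Nonempty)
    (hdiam : Tendsto (fun n => Metric.ediam (s n)) atTop (𝓝 0)) : ∃ p, ∀ n, p ∈ s n := by
  choose u hu using hne
  have hcauchy : CauchySeq u := EMetric.cauchySeq_iff_le_tendsto_0.2
    ⟨_, fun n m N hn hm => Metric.edist_le_ediam_of_mem (hanti hn (hu n)) (hanti hm (hu m)), hdiam⟩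
  obtain ⟨p, hp⟩ := cauchySeq_tendsto_of_complete hcauchy
  exact ⟨p, fun n => (hs n).mem_of_tendsto hp (eventually_atTop.2 ⟨n, fun m hm => hanti hm (hu m)⟩)⟩

end Ekeland

theorem LowerSemicontinuous.exists_ekeland {X : Type*} [EMetricSpace X] [CompleteSpace X]
    {F : X → ℝ≥0∞} {c : ℝ≥0∞} (hF : LowerSemicontinuous F)
    {x : X} (hx : F x ≠ ⊤) (hc0 : c ≠ 0) (hc : c ≠ ⊤) :
    ∃ u, F u + c * edist u x ≤ F x ∧ ∀ v ≠ u, F u < F v + c * edist v u := by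
  -- `u (n + 1)` minimises `F` on `ekelandSet F c (u n)` up to `2⁻¹ ^ n`, which makes the nested
  -- sets shrink to a point.
  choose next hnext_mem hnext_le using fun (w : X) (n : ℕ) =>
    Set.Nonempty.exists_forall_le_add (s := ekelandSet F c w) ⟨w, self_mem_ekelandSet w⟩ F
      (η := 2⁻¹ ^ n) (by simp)
  let u : ℕ → X := fun n => Nat.rec x (fun n w => next w n) n
  have hanti : Antitone fun n => ekelandSet F c (u n) :=
    antitone_nat_of_succ_le fun n => ekelandSet_subset (hnext_mem (u n) n)
  have hfin : ∀ n, F (u n) ≠ ⊤ := fun n =>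
    ne_top_of_le_ne_top hx (le_of_mem_ekelandSet (hanti n.zero_le (self_mem_ekelandSet (u n))))
  have hdiam : ∀ n, Metric.ediam (ekelandSet F c (u (n + 1))) ≤ 2 * 2⁻¹ ^ n / c := fun n =>
    ediam_ekelandSet_le hc0 hc (hfin (n + 1)) (hnext_mem (u n) n) (hnext_le (u n) n)
  have hdiam0 : Tendsto (fun n => Metric.ediam (ekelandSet F c (u (n + 1)))) atTop (𝓝 0) := by
    have : Tendsto (fun n : ℕ => 2 * (2 : ℝ≥0∞)⁻¹ ^ n / c) atTop (𝓝 0) := by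
      simpa using ENNReal.Tendsto.div_const (ENNReal.Tendsto.const_mul
        (ENNReal.tendsto_pow_atTop_nhds_zero_of_lt_one (by norm_num : (2 : ℝ≥0∞)⁻¹ < 1))
        (Or.inr ENNReal.ofNat_ne_top)) (Or.inr hc0)
    exact tendsto_of_tendsto_of_tendsto_of_le_of_le tendsto_const_nhds this
      (fun _ => bot_le) hdiam
  obtain ⟨p, hp⟩ := exists_forall_mem_of_antitone_of_tendsto_ediam
    (fun _ => isClosed_ekelandSet hF hc _)
    (hanti.comp_monotone fun _ _ h => Nat.add_le_add_right h 1)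
    (fun _ => ⟨_, self_mem_ekelandSet _⟩) hdiam0
  refine ⟨p, hanti (Nat.zero_le 1) (hp 0), fun v hvp => ?_⟩
  by_contra! hv
  have hvT : ∀ n, v ∈ ekelandSet F c (u (n + 1)) := fun n => ekelandSet_subset (hp n) hv
  refine hvp (edist_le_zero.1 (ge_of_tendsto' hdiam0 fun n => ?_))
  exact Metric.edist_le_ediam_of_mem (hvT n) (hp n)

section Slope

variable {X : Type*} [MetricSpace X]

lemma epos_eq_toENNReal : epos = EReal.toENNReal := rfl

lemma nslope_le_of_forall_toENNReal_le {f : X → EReal} {x : X} {c : ℝ≥0∞}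
    (h : ∀ v ≠ x, (f x).toENNReal ≤ (f v).toENNReal + c * edist v x) : nslope f x ≤ c := by
  refine iSup₂_le fun v hv => ?_
  have hmax : (max (f v) 0).toENNReal = (f v).toENNReal := by
    rw [max_comm, ← EReal.coe_toENNReal_eq_max, EReal.toENNReal_coe]
  rw [epos_eq_toENNReal, EReal.toENNReal_sub (le_max_right _ _), hmax,
    ENNReal.div_le_iff (edist_pos.2 hv).ne' (edist_ne_top v x)]
  exact tsub_le_iff_left.2 (h v hv)

theorem LowerSemicontinuous.exists_nslope_le [CompleteSpace X] {f : X → EReal}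
    (hf : LowerSemicontinuous f) {x : X} {ε lam : ℝ} (hfx : f x = ε) (hε : 0 < ε)
    (hlam : 0 < lam) :
    ∃ u, f u ≤ f x ∧ dist u x ≤ lam ∧ ε * dist u x ≤ lam * (ε - (f u).toENNReal.toReal) ∧
      nslope f u ≤ ENNReal.ofReal (ε / lam) := by
  have hF : LowerSemicontinuous fun v => (f v).toENNReal :=
    EReal.continuous_toENNReal.comp_lowerSemicontinuous hf
      fun _ _ => EReal.toENNReal_le_toENNReal
  have hFx : (f x).toENNReal = ENNReal.ofReal ε := by rw [hfx]; rfl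
  obtain ⟨u, hux, hmin⟩ := hF.exists_ekeland (x := x) (c := ENNReal.ofReal (ε / lam))
    (by simp [hFx]) (by simp; positivity) ENNReal.ofReal_ne_top
  set t := (f u).toENNReal.toReal
  have hFu : (f u).toENNReal = ENNReal.ofReal t :=
    (ENNReal.ofReal_toReal (ne_top_of_le_ne_top (by simp [hFx]) (le_self_add.trans hux))).symm
  have ht : 0 ≤ t := ENNReal.toReal_nonneg
  have hux' : t + ε / lam * dist u x ≤ ε := by
    rwa [hFx, hFu, edist_dist, ← ENNReal.ofReal_mul (by positivity),
      ← ENNReal.ofReal_add ht (by positivity), ENNReal.ofReal_le_ofReal_iff hε.le] at hux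
  have hdist : ε * dist u x ≤ lam * (ε - t) := by
    rw [div_mul_eq_mul_div, ← le_sub_iff_add_le', div_le_iff₀ hlam] at hux'
    linarith
  refine ⟨u, ?_, ?_, hdist, nslope_le_of_forall_toENNReal_le fun v hv => (hmin v hv).le⟩
  · calc f u ≤ (f u).toENNReal := by rw [EReal.coe_toENNReal_eq_max]; exact le_max_right _ _
      _ ≤ (f x).toENNReal := by exact_mod_cast le_self_add.trans hux
      _ = f x := EReal.coe_toENNReal (hfx ▸ EReal.coe_nonneg.2 hε.le)
  · nlinarith [dist_nonneg (x := u) (y := x)]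

end Slope

section ErrorBound

variable {X : Type*} [MetricSpace X]

lemma EReal.exists_pos_coe {a : EReal} (h0 : 0 < a) (htop : a ≠ ⊤) : ∃ r : ℝ, 0 < r ∧ a = r :=
  ⟨a.toReal, EReal.toReal_pos h0 htop, (EReal.coe_toReal htop h0.ne_bot).symm⟩

lemma coe_ofReal_mul_infEDist {s : Set X} (hs : s.Nonempty) (x : X) {τ : ℝ} (hτ : 0 ≤ τ) :
    ((ENNReal.ofReal τ * Metric.infEDist x s : ℝ≥0∞) : EReal) = (τ * Metric.infDist x s : ℝ) := by
  rw [← ENNReal.ofReal_toReal (Metric.infEDist_ne_top hs), ← ENNReal.ofReal_mul hτ,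
    EReal.coe_ennreal_ofReal, ← Metric.infDist, max_eq_left (mul_nonneg hτ Metric.infDist_nonneg)]

lemma mem_eball_of_dist_le {xb x u : X} {δ : ℝ≥0∞} {α : ℝ} (hα : 0 ≤ α)
    (hx : x ∈ Metric.eball xb (δ / ENNReal.ofReal (1 + α))) (hu : dist u x ≤ α * dist x xb) :
    u ∈ Metric.eball xb δ := by
  rw [Metric.mem_eball] at hx ⊢
  calc edist u xb ≤ edist u x + edist x xb := edist_triangle u x xb
    _ ≤ ENNReal.ofReal (1 + α) * edist x xb := by
        rw [edist_dist, edist_dist, ← ENNReal.ofReal_add dist_nonneg dist_nonneg,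
          ← ENNReal.ofReal_mul (by positivity)]
        gcongr
        linarith
    _ < ENNReal.ofReal (1 + α) * (δ / ENNReal.ofReal (1 + α)) := by
        gcongr
        simp
    _ ≤ δ := ENNReal.mul_div_le

lemma pos_and_mul_lt_infEDist_of_dist_le {f : X → EReal} {x u : X} {ε lam τ a : ℝ}
    (hS : {v | f v ≤ 0}.Nonempty) (hε : 0 < ε) (hfx : f x = ε) (hτ : 0 < τ)
    (hετ : ε < τ * Metric.infDist x {v | f v ≤ 0}) (hlam : lam < Metric.infDist x {v | f v ≤ 0})
    (ha : a ≤ 1) (hfu : f u ≤ f x) (hdist : dist u x ≤ lam)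
    (hdist' : ε * dist u x ≤ lam * (ε - (f u).toENNReal.toReal)) :
    0 < f u ∧ (a : EReal) * f u <
      ((ENNReal.ofReal τ * Metric.infEDist u {v | f v ≤ 0} : ℝ≥0∞) : EReal) := by
  set S := {v | f v ≤ 0}
  have hfu0 : 0 < f u :=
    not_le.1 (Metric.notMem_of_dist_lt_infDist (x := x) (by rw [dist_comm]; linarith))
  obtain ⟨ε', hε', hfu'⟩ := EReal.exists_pos_coe hfu0 (hfu.trans_lt (hfx ▸ EReal.coe_lt_top ε)).ne
  have hε'ε : ε' ≤ ε := by exact_mod_cast hfu' ▸ hfx ▸ hfu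
  rw [hfu', EReal.toReal_toENNReal (EReal.coe_nonneg.2 hε'.le), EReal.toReal_coe] at hdist'
  have hdistS : Metric.infDist x S - dist u x ≤ Metric.infDist u S := by
    linarith [Metric.infDist_le_infDist_add_dist (s := S) (x := x) (y := u), dist_comm x u]
  have hmul : ε * ε' < ε * (τ * (Metric.infDist x S - dist u x)) := by
    nlinarith [mul_le_mul_of_nonneg_right hlam.le (sub_nonneg.2 hε'ε)]
  refine ⟨hfu0, ?_⟩
  rw [hfu', ← EReal.coe_mul, coe_ofReal_mul_infEDist hS u hτ.le, EReal.coe_lt_coe_iff]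
  calc a * ε' ≤ ε' := mul_le_of_le_one_left hε'.le ha
    _ < τ * (Metric.infDist x S - dist u x) := lt_of_mul_lt_mul_left hmul hε.le
    _ ≤ τ * Metric.infDist u S := by gcongr

end ErrorBound

theorem error_bound_on_ball_general {X : Type*} [MetricSpace X] [CompleteSpace X]
    (f : X → EReal) (hlsc : LowerSemicontinuous f)
    (xb : X) (hxb : f xb ≤ 0) (τ α : ℝ) (hτ : 0 < τ) (hα : α ∈ Set.Ioc (0 : ℝ) 1)
    (δ μ : ℝ≥0∞)
    (h : ∀ u ∈ EMetric.ball xb δ, 0 < f u → f u < (μ : EReal) →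
      (max α (1 - α) : EReal) * f u <
        ((ENNReal.ofReal τ * EMetric.infEdist u {v | f v ≤ 0} : ℝ≥0∞) : EReal) →
      ENNReal.ofReal τ ≤ ENNReal.ofReal α * nslope f u) :
    ∀ x ∈ EMetric.ball xb (δ / ENNReal.ofReal (1 + α)), 0 < f x → f x < (μ : EReal) →
      ((ENNReal.ofReal τ * EMetric.infEdist x {v | f v ≤ 0} : ℝ≥0∞) : EReal) ≤ f x := by
  intro x hx hfx0 hfxμ
  by_contra! hcon
  set S := {v | f v ≤ 0}
  have hS : S.Nonempty := ⟨xb, hxb⟩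
  obtain ⟨ε, hε, hfx⟩ := EReal.exists_pos_coe hfx0 (hfxμ.trans_le le_top).ne
  replace hcon : ε < τ * Metric.infDist x S := by
    exact_mod_cast hfx ▸ hcon.trans_eq (coe_ofReal_mul_infEDist hS x hτ.le)
  obtain ⟨lam, hlam_gt, hlam_lt⟩ := exists_between (show α * ε / τ < α * Metric.infDist x S by
    rw [mul_div_assoc]; gcongr; exacts [hα.1, (div_lt_iff₀' hτ).2 hcon])
  have hlam0 : 0 < lam := lt_of_le_of_lt (div_nonneg (mul_nonneg hα.1.le hε.le) hτ.le) hlam_gt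
  obtain ⟨u, hfu, hdist, hdist', hslope⟩ := hlsc.exists_nslope_le hfx hε hlam0
  have hu : u ∈ EMetric.ball xb δ := mem_eball_of_dist_le hα.1.le hx <| hdist.trans <|
    hlam_lt.le.trans (by gcongr; exacts [hα.1.le, Metric.infDist_le_dist_of_mem hxb])
  have hmax : (max α (1 - α) : EReal) = (max α (1 - α) : ℝ) := by
    rw [EReal.coe_strictMono.monotone.map_max, EReal.coe_sub, EReal.coe_one]
  obtain ⟨hfu0, hprem⟩ :=
    pos_and_mul_lt_infEDist_of_dist_le (a := max α (1 - α)) hS hε hfx hτ hcon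
      (hlam_lt.trans_le (mul_le_of_le_one_left Metric.infDist_nonneg hα.2))
      (max_le hα.2 (by linarith [hα.1])) hfu hdist hdist'
  have hτα := h u hu hfu0 (hfu.trans_lt hfxμ) (hmax ▸ hprem)
  refine (hτα.trans_lt ?_).false
  calc ENNReal.ofReal α * nslope f u ≤ ENNReal.ofReal α * ENNReal.ofReal (ε / lam) := by gcongr
    _ = ENNReal.ofReal (α * ε / lam) := by rw [← ENNReal.ofReal_mul hα.1.le, mul_div_assoc]
    _ < ENNReal.ofReal τ := (ENNReal.ofReal_lt_ofReal_iff hτ).2 <|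
        (div_lt_iff₀ hlam0).2 (by rwa [div_lt_iff₀' hτ] at hlam_gt)

/-- Theorem 2.2(i) with the nonlocal lslope: the sufficient lslope condition on
`B_δ(x̄) ∩ [0<f<μ]` yields the `τ`-error bound on `B_{δ/(1+α)}(x̄) ∩ [0<f<μ]`. -/
theorem error_bound_on_ball {X : Type*} [MetricSpace X] [CompleteSpace X]
    (f : X → EReal) (hbot : ∀ u, f u ≠ ⊥) (hlsc : LowerSemicontinuous f)
    (xb : X) (hxb : f xb ≤ 0) (τ α : ℝ) (hτ : 0 < τ) (hα : α ∈ Set.Ioc (0 : ℝ) 1)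
    (δ μ : ℝ≥0∞) (hδ : 0 < δ) (hμ : 0 < μ)
    (h : ∀ u ∈ EMetric.ball xb δ, 0 < f u → f u < (μ : EReal) →
      (max α (1 - α) : EReal) * f u <
        ((ENNReal.ofReal τ * EMetric.infEdist u {v | f v ≤ 0} : ℝ≥0∞) : EReal) →
      ENNReal.ofReal τ ≤ ENNReal.ofReal α * nslope f u) :
    ∀ x ∈ EMetric.ball xb (δ / ENNReal.ofReal (1 + α)), 0 < f x → f x < (μ : EReal) →
      ((ENNReal.ofReal τ * EMetric.infEdist x {v | f v ≤ 0} : ℝ≥0∞) : EReal) ≤ f x :=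
  error_bound_on_ball_general f hlsc xb hxb τ α hτ hα δ μ h
end

section
/- Let X be a complete metric space, f: X → ℝ∪{+∞} lower semicontinuous, x̄ ∈ [f≤0], and φ: ℝ₊ → ℝ₊ with φ(0) = 0, φ(t) > 0 for t > 0, φ continuously differentiable on ]0,+∞[ with φ' > 0 there, and lim_{t→+∞} φ(t) = +∞. If |∇(φ∘f₊)|⋄(x) ≥ 1 for all x with f(x) > 0 near x̄ with f(x) near 0 (precisely: there exist δ, μ > 0 such that this holds for all x ∈ B_δ(x̄) with 0 < f(x) < μ), then f admits a local φ-error bound at x̄: there exist δ', μ' > 0 with d(x,[f≤0]) ≤ φ(f(x)) for all x ∈ B_{δ'}(x̄) with 0 < f(x) < μ'. -/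
open Filter EMetric Set Topology
open scoped ENNReal NNReal

/-!
Let `H := φ ∘ f₊`, an `ℝ≥0∞`-valued function which is lower semicontinuous because `φ` is
increasing, continuous on `]0, +∞[` and unbounded. Suppose `d(x, [f ≤ 0]) > φ(f x) = H x`. Since
`H ≥ 0`, `x` is an `H x`-minimiser of `H`, so Ekeland's principle with a constant `σ < 1` gives a
point `y` with `H y ≤ H x`, `d(y, x) < d(x, [f ≤ 0])` and `H y < H u + σ d(u, y)` for all `u ≠ y`.
Then `y ∉ [f ≤ 0]`, `f y ≤ f x`, `y` is still close to `x̄`, and the strong slope of `φ ∘ f₊`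
at `y` is at most `σ < 1`, contradicting the hypothesis.
-/

section Ekeland

variable {X : Type*} [EMetricSpace X] {H : X → ℝ≥0∞} {σ : ℝ≥0∞} {u v x : X}

/-- Brøndsted's order `u ≼ x`, the order underlying Ekeland's principle. -/
def EkelandLE (H : X → ℝ≥0∞) (σ : ℝ≥0∞) (u x : X) : Prop := H u + σ * edist u x ≤ H x

theorem EkelandLE.refl (x : X) : EkelandLE H σ x x := by simp [EkelandLE]

theorem EkelandLE.apply_le (h : EkelandLE H σ u x) : H u ≤ H x := le_self_add.trans h

theorem EkelandLE.trans (huv : EkelandLE H σ u v) (hvx : EkelandLE H σ v x) :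
    EkelandLE H σ u x :=
  calc H u + σ * edist u x ≤ H u + σ * edist u v + σ * edist v x := by
        rw [add_assoc, ← mul_add]; gcongr; exact edist_triangle _ _ _
    _ ≤ H v + σ * edist v x := by gcongr; exact huv
    _ ≤ H x := hvx

theorem isClosed_setOf_ekelandLE (hH : LowerSemicontinuous H) (hσ : σ ≠ ⊤) (x : X) :
    IsClosed {u | EkelandLE H σ u x} :=
  (hH.add ((ENNReal.continuous_const_mul hσ).comp
    (continuous_id.edist continuous_const)).lowerSemicontinuous).isClosed_preimage (H x)

theorem exists_ekelandLE_forall_edist_lt (hσ : σ ≠ 0) (hx : H x ≠ ⊤) {ε : ℝ≥0∞} (hε : ε ≠ 0) :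
    ∃ u, EkelandLE H σ u x ∧ ∀ v, EkelandLE H σ v u → edist v u < ε := by
  set I := sInf (H '' {v | EkelandLE H σ v x})
  have hI : I ≠ ⊤ := ne_top_of_le_ne_top hx (sInf_le ⟨x, .refl x, rfl⟩)
  obtain ⟨_, ⟨u, hux, rfl⟩, hu⟩ :=
    sInf_lt_iff.1 (ENNReal.lt_add_right hI (mul_ne_zero hσ hε))
  refine ⟨u, hux, fun v hvu => ?_⟩
  have hv : H v ≠ ⊤ := ne_top_of_le_ne_top hx (hvu.trans hux).apply_le
  have : H v + σ * edist v u < H v + σ * ε :=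
    calc H v + σ * edist v u ≤ H u := hvu
      _ < I + σ * ε := hu
      _ ≤ H v + σ * ε := by gcongr; exact sInf_le ⟨v, hvu.trans hux, rfl⟩
  exact lt_of_mul_lt_mul_left ((ENNReal.add_lt_add_iff_left hv).1 this) zero_le

theorem exists_seq_ekelandLE (hσ : σ ≠ 0) (hx : H x ≠ ⊤) {ε : ℕ → ℝ≥0∞} (hε : ∀ n, ε n ≠ 0) :
    ∃ s : ℕ → X, EkelandLE H σ (s 0) x ∧ (∀ n, EkelandLE H σ (s (n + 1)) (s n)) ∧
      ∀ n v, EkelandLE H σ v (s n) → edist v (s n) < ε n := by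
  have step : ∀ n (p : {x // H x ≠ ⊤}), ∃ q : {x // H x ≠ ⊤},
      EkelandLE H σ q p ∧ ∀ v, EkelandLE H σ v q → edist v q < ε n := by
    rintro n ⟨p, hp⟩
    obtain ⟨q, hqp, hq⟩ := exists_ekelandLE_forall_edist_lt hσ hp (hε n)
    exact ⟨⟨q, ne_top_of_le_ne_top hp hqp.apply_le⟩, hqp, hq⟩
  choose next hnext using step
  let t : ℕ → {x // H x ≠ ⊤} := fun n => Nat.rec ⟨x, hx⟩ next n
  exact ⟨fun n => t (n + 1), (hnext 0 _).1, fun n => (hnext (n + 1) _).1,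
    fun n => (hnext n (t n)).2⟩

theorem exists_ekelandLE_forall_ekelandLE_eq [CompleteSpace X] (hH : LowerSemicontinuous H)
    (hσ0 : σ ≠ 0) (hσ : σ ≠ ⊤) (hx : H x ≠ ⊤) :
    ∃ y, EkelandLE H σ y x ∧ ∀ u, EkelandLE H σ u y → u = y := by
  obtain ⟨s, hs0, hstep, hslice⟩ := exists_seq_ekelandLE hσ0 hx
    (ε := fun n => (n : ℝ≥0∞)⁻¹) fun n => ENNReal.inv_ne_zero.2 (ENNReal.natCast_ne_top n)
  have hε := ENNReal.tendsto_inv_nat_nhds_zero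
  have hchain : ∀ n m, n ≤ m → EkelandLE H σ (s m) (s n) := fun n m hnm => by
    induction m, hnm using Nat.le_induction with
    | base => exact .refl _
    | succ m _ ih => exact (hstep m).trans ih
  have hcauchy : CauchySeq s := by
    refine EMetric.cauchySeq_iff_le_tendsto_0.2
      ⟨fun N => (N : ℝ≥0∞)⁻¹ + (N : ℝ≥0∞)⁻¹, fun n m N hn hm => ?_, by simpa using hε.add hε⟩
    calc edist (s n) (s m) ≤ edist (s n) (s N) + edist (s m) (s N) := edist_triangle_right _ _ _
      _ ≤ _ := add_le_add (hslice N _ (hchain N n hn)).le (hslice N _ (hchain N m hm)).le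
  obtain ⟨y, hy⟩ := cauchySeq_tendsto_of_complete hcauchy
  have hys : ∀ n, EkelandLE H σ y (s n) := fun n =>
    (isClosed_setOf_ekelandLE hH hσ (s n)).mem_of_tendsto hy
      (eventually_atTop.2 ⟨n, hchain n⟩)
  refine ⟨y, (hys 0).trans hs0, fun u huy => tendsto_nhds_unique ?_ hy⟩
  refine tendsto_iff_edist_tendsto_0.2 (tendsto_of_tendsto_of_tendsto_of_le_of_le
    tendsto_const_nhds hε (fun _ => zero_le) fun n => ?_)
  rw [edist_comm]
  exact (hslice n u (huy.trans (hys n))).le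

theorem exists_edist_lt_forall_lt_add_mul [CompleteSpace X] (hH : LowerSemicontinuous H)
    {r : ℝ≥0∞} (hxr : H x < r) :
    ∃ y, H y ≤ H x ∧ edist y x < r ∧ ∃ σ < 1, ∀ u ≠ y, H y < H u + σ * edist u y := by
  have hx : H x ≠ ⊤ := hxr.ne_top
  -- `σ > H x / r` makes `σ * r > H x`, which keeps the Ekeland point within distance `r`.
  obtain ⟨σ, hσ, hσ1⟩ := exists_between (ENNReal.div_lt_of_lt_mul (by rwa [one_mul]))
  have hxσ : H x < σ * r := (ENNReal.div_lt_iff (Or.inl (pos_of_gt hxr).ne') (Or.inr hx)).1 hσ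
  obtain ⟨y, hyx, hy⟩ := exists_ekelandLE_forall_ekelandLE_eq hH (pos_of_gt hσ).ne'
    hσ1.ne_top hx
  refine ⟨y, hyx.apply_le, ?_, σ, hσ1, fun u hu => not_le.1 (mt (hy u) hu)⟩
  exact lt_of_mul_lt_mul_left ((le_add_self.trans hyx).trans_lt hxσ) zero_le

end Ekeland

theorem epos_sub_max_zero_le (a b : EReal) : epos (a - max b 0) ≤ epos a - epos b := by
  induction a using EReal.rec <;> induction b using EReal.rec <;> simp [epos]
  case coe.coe a b =>
    rcases le_total b 0 with hb | hb
    · rw [max_eq_right (EReal.coe_nonpos.2 hb), ENNReal.ofReal_of_nonpos hb]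
      simp
    · rw [max_eq_left (EReal.coe_nonneg.2 hb), ← EReal.coe_sub, if_neg (EReal.coe_ne_top _),
        EReal.toReal_coe, ← ENNReal.ofReal_sub _ hb]

theorem nslope_le_of_forall_epos_le_add {X : Type*} [MetricSpace X] {g : X → EReal} {x : X}
    {σ : ℝ≥0∞} (h : ∀ u ≠ x, epos (g x) ≤ epos (g u) + σ * edist u x) : nslope g x ≤ σ :=
  iSup₂_le fun u hu => ENNReal.div_le_of_le_mul
    ((epos_sub_max_zero_le _ _).trans (tsub_le_iff_left.2 (h u hu)))

section PhiPos

variable {φ : ℝ → ℝ}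

/-- The paper's `φ ∘ f₊` at a value `a = f x`, with `φ (+∞) = +∞`. -/
noncomputable def phiPos (φ : ℝ → ℝ) (a : EReal) : ℝ≥0∞ :=
  if a = ⊤ then ⊤ else ENNReal.ofReal (φ (max a.toReal 0))

theorem phiPos_of_nonpos (hφ0 : φ 0 = 0) {a : EReal} (ha : a ≤ 0) : phiPos φ a = 0 := by
  have ha' : a ≠ ⊤ := (ha.trans_lt EReal.zero_lt_top).ne
  simp [phiPos, ha', max_eq_right (EReal.toReal_nonpos ha), hφ0]

theorem phiPos_of_pos {a : EReal} (ha : 0 < a) (ha' : a ≠ ⊤) :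
    phiPos φ a = ENNReal.ofReal (φ a.toReal) := by
  simp [phiPos, ha', max_eq_left (EReal.toReal_pos ha ha').le]

theorem monotone_phiPos (hφ : MonotoneOn φ (Ici 0)) : Monotone (phiPos φ) := by
  intro a b hab
  induction a using EReal.rec <;> induction b using EReal.rec <;> simp_all [phiPos]
  case bot.coe b =>
    exact ENNReal.ofReal_le_ofReal <| hφ self_mem_Ici (le_max_right b 0) (le_max_right b 0)
  case coe.coe a b =>
    exact ENNReal.ofReal_le_ofReal <|
      hφ (le_max_right a 0) (le_max_right b 0) (max_le_max_right 0 hab)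

theorem strictMonoOn_phiPos (hφ : StrictMonoOn φ (Ici 0)) (hφ0 : 0 ≤ φ 0) :
    StrictMonoOn (phiPos φ) (Ici 0) := by
  intro a ha b hb hab
  induction a using EReal.rec <;> induction b using EReal.rec <;> simp_all [phiPos]
  case coe.coe a b =>
    exact ENNReal.ofReal_lt_ofReal_iff'.2
      ⟨hφ ha hb hab, hφ0.trans_lt (hφ self_mem_Ici hb (ha.trans_lt hab))⟩

theorem continuousAt_phiPos (hφ : MonotoneOn φ (Ici 0)) (hcont : ContinuousOn φ (Ioi 0))
    (htop : Tendsto φ atTop atTop) {a : EReal} (ha : 0 < a) : ContinuousAt (phiPos φ) a := by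
  rcases eq_or_ne a ⊤ with rfl | ha'
  · show Tendsto (phiPos φ) (𝓝 ⊤) (𝓝 (phiPos φ ⊤))
    rw [show phiPos φ ⊤ = ⊤ from if_pos rfl]
    refine ENNReal.tendsto_nhds_top fun n => ?_
    obtain ⟨t, hnt, ht⟩ := ((htop.eventually_gt_atTop n).and (eventually_gt_atTop 0)).exists
    filter_upwards [lt_mem_nhds (EReal.coe_lt_top t)] with b hb
    calc (n : ℝ≥0∞) = ENNReal.ofReal n := (ENNReal.ofReal_natCast n).symm
      _ < ENNReal.ofReal (φ t) := ENNReal.ofReal_lt_ofReal_iff'.2 ⟨hnt, n.cast_nonneg.trans_lt hnt⟩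
      _ = phiPos φ t := (phiPos_of_pos (EReal.coe_pos.2 ht) (EReal.coe_ne_top t)).symm
      _ ≤ phiPos φ b := monotone_phiPos hφ hb.le
  · have hpos : ∀ᶠ b in 𝓝 a, 0 < b ∧ b ≠ ⊤ :=
      (lt_mem_nhds ha).and ((gt_mem_nhds (lt_top_iff_ne_top.2 ha')).mono fun _ hb => hb.ne)
    refine ContinuousAt.congr ?_ (hpos.mono fun b hb => (phiPos_of_pos hb.1 hb.2).symm)
    exact ENNReal.continuous_ofReal.continuousAt.comp <|
      (hcont.continuousAt (Ioi_mem_nhds (EReal.toReal_pos ha ha'))).comp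
        (EReal.tendsto_toReal ha' ha.ne_bot)

theorem LowerSemicontinuous.phiPos_comp {X : Type*} [TopologicalSpace X] {f : X → EReal}
    (hf : LowerSemicontinuous f) (hφ0 : φ 0 = 0) (hφ : MonotoneOn φ (Ici 0))
    (hcont : ContinuousOn φ (Ioi 0)) (htop : Tendsto φ atTop atTop) :
    LowerSemicontinuous fun x => phiPos φ (f x) := by
  intro x
  rcases le_or_gt (f x) 0 with hx | hx
  · intro c hc
    dsimp only at hc
    rw [phiPos_of_nonpos hφ0 hx] at hc
    exact absurd hc ENNReal.not_lt_zero
  · exact (continuousAt_phiPos hφ hcont htop hx).comp_lowerSemicontinuousAt (hf x)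
      (monotone_phiPos hφ)

end PhiPos

theorem strictMonoOn_Ici_of_hasDerivAt_pos {φ φ' : ℝ → ℝ} (hφ0 : φ 0 = 0)
    (hφpos : ∀ t > (0 : ℝ), 0 < φ t) (hder : ∀ t > (0 : ℝ), HasDerivAt φ (φ' t) t)
    (hd : ∀ t > (0 : ℝ), 0 < φ' t) : StrictMonoOn φ (Ici 0) := by
  have hIoi : StrictMonoOn φ (Ioi 0) :=
    strictMonoOn_of_deriv_pos (convex_Ioi 0)
      (fun t ht => (hder t ht).continuousAt.continuousWithinAt)
      fun t ht => by rw [interior_Ioi] at ht; rw [(hder t ht).deriv]; exact hd t ht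
  rintro s hs t ht hst
  rcases (mem_Ici.1 hs).eq_or_lt with rfl | hs
  · rw [hφ0]; exact hφpos t hst
  · exact hIoi hs (hs.trans hst) hst

theorem local_phi_error_bound_of_nslope_general {X : Type*} [MetricSpace X] [CompleteSpace X]
    (f : X → EReal) (hlsc : LowerSemicontinuous f)
    (xb : X) (hxb : f xb ≤ 0)
    (φ φ' : ℝ → ℝ) (hφ0 : ∀ t ≤ (0 : ℝ), φ t = 0) (hφpos : ∀ t > (0 : ℝ), 0 < φ t)
    (hder : ∀ t > (0 : ℝ), HasDerivAt φ (φ' t) t)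
    (hd : ∀ t > (0 : ℝ), 0 < φ' t)
    (htop : Filter.Tendsto φ Filter.atTop Filter.atTop)
    (h : ∃ δ > (0 : ℝ), ∃ μ > (0 : ℝ), ∀ x ∈ EMetric.ball xb (ENNReal.ofReal δ),
      0 < f x → f x < (μ : EReal) →
      1 ≤ nslope (fun u => if f u = ⊤ then (⊤ : EReal)
            else ((φ (max (f u).toReal 0)) : EReal)) x) :
    ∃ δ' > (0 : ℝ), ∃ μ' > (0 : ℝ), ∀ x ∈ EMetric.ball xb (ENNReal.ofReal δ'),
      0 < f x → f x < (μ' : EReal) →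
      EMetric.infEdist x {v | f v ≤ 0} ≤ ENNReal.ofReal (φ (f x).toReal) := by
  obtain ⟨δ, hδ, μ, hμ, hslope⟩ := h
  have hφ : StrictMonoOn φ (Ici 0) :=
    strictMonoOn_Ici_of_hasDerivAt_pos (hφ0 0 le_rfl) hφpos hder hd
  have hH : LowerSemicontinuous fun u => phiPos φ (f u) :=
    hlsc.phiPos_comp (hφ0 0 le_rfl) hφ.monotoneOn
      (fun t ht => (hder t ht).continuousAt.continuousWithinAt) htop
  have hg : ∀ a : EReal,
      epos (if a = ⊤ then ⊤ else ((φ (max a.toReal 0) : ℝ) : EReal)) = phiPos φ a := fun a => by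
    unfold epos phiPos; split_ifs <;> simp_all
  refine ⟨δ / 2, half_pos hδ, μ, hμ, fun x hx hfx hfxμ => ?_⟩
  by_contra! hfar
  rw [← phiPos_of_pos hfx (hfxμ.trans (EReal.coe_lt_top μ)).ne] at hfar
  obtain ⟨y, hyx, hdist, σ, hσ1, hmin⟩ := exists_edist_lt_forall_lt_add_mul hH hfar
  have hfy : 0 < f y := not_le.1 fun hy =>
    hdist.not_ge (by rw [edist_comm]; exact Metric.infEDist_le_edist_of_mem hy)
  have hfyx : f y ≤ f x :=
    ((strictMonoOn_phiPos hφ (hφ0 0 le_rfl).ge).le_iff_le hfy.le hfx.le).1 hyx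
  have hyb : edist y xb < ENNReal.ofReal δ :=
    calc edist y xb ≤ edist y x + edist x xb := edist_triangle _ _ _
      _ < ENNReal.ofReal (δ / 2) + ENNReal.ofReal (δ / 2) :=
        ENNReal.add_lt_add ((hdist.trans_le (Metric.infEDist_le_edist_of_mem hxb)).trans hx) hx
      _ = ENNReal.ofReal δ := by
        rw [← ENNReal.ofReal_add (by positivity) (by positivity), add_halves]
  refine (hslope y hyb hfy (hfyx.trans_lt hfxμ)).not_gt
    ((nslope_le_of_forall_epos_le_add fun u hu => ?_).trans_lt hσ1)
  simpa only [hg] using (hmin u hu).le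

/-- Corollary 2.3(i): if `|∇(φ∘f₊)|⋄(x) ≥ 1` for all `x ∈ [f>0]` near `x̄` with
`f(x)` near `0`, then `f` admits a local `φ`-error bound at `x̄ ∈ [f≤0]`.  Here `φ ∈ C¹`
(extended by `0` on the negative half-line). -/
theorem local_phi_error_bound_of_nslope {X : Type*} [MetricSpace X] [CompleteSpace X]
    (f : X → EReal) (hbot : ∀ u, f u ≠ ⊥) (hlsc : LowerSemicontinuous f)
    (xb : X) (hxb : f xb ≤ 0)
    (φ φ' : ℝ → ℝ) (hφ0 : ∀ t ≤ (0 : ℝ), φ t = 0) (hφpos : ∀ t > (0 : ℝ), 0 < φ t)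
    (hder : ∀ t > (0 : ℝ), HasDerivAt φ (φ' t) t)
    (hcont : ContinuousOn φ' (Set.Ioi (0 : ℝ))) (hd : ∀ t > (0 : ℝ), 0 < φ' t)
    (htop : Filter.Tendsto φ Filter.atTop Filter.atTop)
    (h : ∃ δ > (0 : ℝ), ∃ μ > (0 : ℝ), ∀ x ∈ EMetric.ball xb (ENNReal.ofReal δ),
      0 < f x → f x < (μ : EReal) →
      1 ≤ nslope (fun u => if f u = ⊤ then (⊤ : EReal)
            else ((φ (max (f u).toReal 0)) : EReal)) x) :
    ∃ δ' > (0 : ℝ), ∃ μ' > (0 : ℝ), ∀ x ∈ EMetric.ball xb (ENNReal.ofReal δ'),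
      0 < f x → f x < (μ' : EReal) →
      EMetric.infEdist x {v | f v ≤ 0} ≤ ENNReal.ofReal (φ (f x).toReal) :=
  local_phi_error_bound_of_nslope_general f hlsc xb hxb φ φ' hφ0 hφpos hder hd htop h
end

section
/- Let X be a complete metric space, f: X → ℝ∪{+∞} lower semicontinuous, x̄ ∈ [f≤0], φ ∈ C¹ concave (φ: ℝ₊ → ℝ₊, φ(0)=0, φ(t)>0 for t>0, continuously differentiable on ]0,+∞[ with φ'>0, φ(t)→+∞, and φ concave). If φ'(φ⁻¹(d(x,[f≤0])))·|∇f|(x) ≥ 1 for all x with f(x) > 0 near x̄ with f(x) near 0 (precisely: there exist δ, μ > 0 such that this holds for all x ∈ B_δ(x̄) with 0 < f(x) < μ), then f admits a local φ-error bound at x̄: there exist δ', μ' > 0 with d(x,[f≤0]) ≤ φ(f(x)) for all x ∈ B_{δ'}(x̄) with 0 < f(x) < μ'. -/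
/-!
Suppose `d(x, [f ≤ 0]) > φ(f x)` at a point `x` near `x̄` with `0 < f x < μ`.
Ekeland's variational principle, applied to `φ ∘ f` (truncated to `[0, μ]` so that it is
real-valued) with a constant `κ < 1`, gives a point `y` near `x̄` with `0 < f y < μ` and
`φ(f y) < d(y, [f ≤ 0])` from which `φ ∘ f` decreases at rate at most `κ`. By concavity of `φ`
this means `|∇f|(y) ≤ κ / φ'(f y)`, and also `φ'(φ⁻¹(d(y, [f ≤ 0]))) ≤ φ'(f y)`, so the
product in the hypothesis is at most `κ < 1` at `y`.
-/

open Filter EMetric Set Topology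
open scoped ENNReal NNReal

open Metric

section Ekeland

variable {X : Type*} [MetricSpace X] {g : X → ℝ} {κ : ℝ}

lemma cauchySeq_of_add_mul_dist_le (hκ : 0 < κ) {x : ℕ → X}
    (hbdd : BddBelow (range (g ∘ x)))
    (hx : ∀ n m, n ≤ m → g (x m) + κ * dist (x m) (x n) ≤ g (x n)) : CauchySeq x := by
  have hanti : Antitone (g ∘ x) := fun n m hnm => by
    have := mul_nonneg hκ.le (dist_nonneg (x := x m) (y := x n))
    simp only [Function.comp_apply]
    linarith [hx n m hnm]
  refine cauchySeq_of_le_tendsto_0' (fun n => (g (x n) - ⨅ k, g (x k)) / κ)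
    (fun n m hnm => ?_) ?_
  · rw [le_div_iff₀ hκ, dist_comm]
    have : (⨅ k, g (x k)) ≤ g (x m) := ciInf_le hbdd m
    linarith [hx n m hnm]
  · simpa using ((tendsto_atTop_ciInf hanti hbdd).sub_const (⨅ k, g (x k))).div_const κ

lemma exists_seq_almost_minimizing (hbdd : BddBelow (range g)) (κ : ℝ) (x₀ : X) :
    ∃ x : ℕ → X, x 0 = x₀ ∧
      ∀ n, g (x (n + 1)) + κ * dist (x (n + 1)) (x n) ≤ g (x n) ∧
      ∀ w, g w + κ * dist w (x n) ≤ g (x n) → g (x (n + 1)) ≤ g w + (1 / 2) ^ n := by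
  have hstep : ∀ (n : ℕ) (v : X), ∃ u, g u + κ * dist u v ≤ g v ∧
      ∀ w, g w + κ * dist w v ≤ g v → g u ≤ g w + (1 / 2) ^ n := by
    intro n v
    have hne : (g '' {w | g w + κ * dist w v ≤ g v}).Nonempty := ⟨g v, v, by simp, rfl⟩
    obtain ⟨_, ⟨u, hu, rfl⟩, hlt⟩ :=
      Real.lt_sInf_add_pos hne (by positivity : (0 : ℝ) < (1 / 2) ^ n)
    refine ⟨u, hu, fun w hw => hlt.le.trans ?_⟩
    gcongr
    exact csInf_le (hbdd.mono (image_subset_range _ _)) ⟨w, hw, rfl⟩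
  choose next hnext using hstep
  exact ⟨fun n => Nat.rec x₀ next n, rfl, fun n => hnext n _⟩

theorem LowerSemicontinuous.ekeland [CompleteSpace X] (hg : LowerSemicontinuous g)
    (hbdd : BddBelow (range g)) (hκ : 0 < κ) (x₀ : X) :
    ∃ y, g y + κ * dist y x₀ ≤ g x₀ ∧ ∀ u, g y ≤ g u + κ * dist u y := by
  obtain ⟨x, hx₀, hx⟩ := exists_seq_almost_minimizing hbdd κ x₀
  have htrans {u v w : X} (huv : g u + κ * dist u v ≤ g v) (hvw : g v + κ * dist v w ≤ g w) :
      g u + κ * dist u w ≤ g w := by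
    nlinarith [dist_triangle u v w]
  have hchain (n m : ℕ) (hnm : n ≤ m) : g (x m) + κ * dist (x m) (x n) ≤ g (x n) := by
    induction m, hnm using Nat.le_induction with
    | base => simp
    | succ m _ ih => exact htrans (hx m).1 ih
  obtain ⟨y, hy⟩ := cauchySeq_tendsto_of_complete
    (cauchySeq_of_add_mul_dist_le hκ (hbdd.mono (range_comp_subset_range _ _)) hchain)
  have hyx (n : ℕ) : g y + κ * dist y (x n) ≤ g (x n) := by
    have hclosed : IsClosed {w | g w + κ * dist w (x n) ≤ g (x n)} :=
      (hg.add (continuous_const.mul (continuous_id.dist continuous_const)).lowerSemicontinuous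
        ).isClosed_preimage (g (x n))
    exact hclosed.mem_of_tendsto hy (eventually_atTop.2 ⟨n, hchain n⟩)
  refine ⟨y, hx₀ ▸ hyx 0, fun u => ?_⟩
  by_cases huy : g u + κ * dist u y ≤ g y
  · -- `u` meets every constraint of the construction, so `g y ≤ g (x (n + 1)) ≤ g u + 2⁻ⁿ`
    have hle (n : ℕ) : g y ≤ g u + (1 / 2) ^ n := by
      have := mul_nonneg hκ.le (dist_nonneg (x := y) (y := x (n + 1)))
      linarith [hyx (n + 1), (hx n).2 u (htrans huy (hyx n))]
    have hlim := tendsto_const_nhds (x := g u).add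
      (tendsto_pow_atTop_nhds_zero_of_lt_one (r := (1 / 2 : ℝ)) (by norm_num) (by norm_num))
    have := mul_nonneg hκ.le (dist_nonneg (x := u) (y := y))
    linarith [ge_of_tendsto' hlim hle]
  · linarith

theorem exists_lt_infDist_of_lt_infDist [CompleteSpace X] (hg : LowerSemicontinuous g)
    (hg0 : ∀ u, 0 ≤ g u) {S : Set X} {x : X}
    (hx : g x < infDist x S) :
    ∃ y, g y ≤ g x ∧ g y + dist y x < infDist x S ∧ g y < infDist y S ∧
      ∃ κ, 0 ≤ κ ∧ κ < 1 ∧ ∀ u, g y ≤ g u + κ * dist u y := by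
  have hdx : 0 < infDist x S := (hg0 x).trans_lt hx
  obtain ⟨κ, hκl, hκ1⟩ := exists_between ((div_lt_one hdx).2 hx)
  have hκ : 0 < κ := (div_nonneg (hg0 x) hdx.le).trans_lt hκl
  have hκd : g x < κ * infDist x S := (div_lt_iff₀ hdx).1 hκl
  obtain ⟨y, hyx, hy⟩ := hg.ekeland ⟨0, forall_mem_range.2 hg0⟩ hκ x
  -- `κ (g y + d(y, x)) ≤ g y + κ d(y, x) ≤ g x < κ d(x, S)`
  have hclose : g y + dist y x < infDist x S := by
    refine lt_of_mul_lt_mul_left ?_ hκ.le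
    nlinarith [hg0 y]
  refine ⟨y, ?_, hclose, ?_, κ, hκ.le, hκ1, hy⟩
  · nlinarith [dist_nonneg (x := y) (y := x)]
  · linarith [infDist_le_infDist_add_dist (s := S) (x := x) (y := y), dist_comm x y]

end Ekeland

lemma epos_le_ofReal {a : EReal} {r : ℝ} (h : a ≤ r) : epos a ≤ ENNReal.ofReal r := by
  rw [epos, if_neg (h.trans_lt (EReal.coe_lt_top r)).ne]
  by_cases ha : a = ⊥
  · simp [ha]
  · exact ENNReal.ofReal_le_ofReal
      (by simpa using EReal.toReal_le_toReal h ha (EReal.coe_ne_top r))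

lemma lslope_le_of_eventually_le_add {X : Type*} [MetricSpace X] {f : X → EReal} {y : X}
    {c : ℝ} (h : ∀ᶠ u in 𝓝[≠] y, f y ≤ f u + (c * dist u y : ℝ)) :
    lslope f y ≤ ENNReal.ofReal c := by
  refine limsup_le_of_le (by isBoundedDefault) ?_
  filter_upwards [h, self_mem_nhdsWithin] with u hu hne
  have hd : 0 < dist u y := dist_pos.2 hne
  calc epos (f y - f u) / edist u y
      ≤ ENNReal.ofReal (c * dist u y) / ENNReal.ofReal (dist u y) := by
        rw [edist_dist]
        gcongr
        refine epos_le_ofReal ((EReal.sub_le_iff_le_add (Or.inr (EReal.coe_ne_top _))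
          (Or.inr (EReal.coe_ne_bot _))).2 ?_)
        rwa [add_comm]
    _ = ENNReal.ofReal c := by
        rw [← ENNReal.ofReal_div_of_pos hd, mul_div_cancel_right₀ _ hd.ne']

section Concave

variable {φ φ' : ℝ → ℝ}

lemma ConcaveOn.mul_sub_le_sub_of_hasDerivAt {S : Set ℝ} {a b d : ℝ}
    (hconc : ConcaveOn ℝ S φ) (ha : a ∈ S) (hb : b ∈ S) (hab : a < b)
    (hder : HasDerivAt φ d b) :
    d * (b - a) ≤ φ b - φ a := by
  have := hconc.le_slope_of_hasDerivAt ha hb hab hder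
  rwa [slope_def_field, le_div_iff₀ (sub_pos.2 hab)] at this

lemma ConcaveOn.strictMonoOn_of_hasDerivAt_pos (hconc : ConcaveOn ℝ (Ici 0) φ)
    (hder : ∀ t > 0, HasDerivAt φ (φ' t) t) (hd : ∀ t > 0, 0 < φ' t) :
    StrictMonoOn φ (Ici 0) := by
  intro a ha b hb hab
  have hb0 : 0 < b := lt_of_le_of_lt ha hab
  have := hconc.mul_sub_le_sub_of_hasDerivAt ha hb hab (hder b hb0)
  nlinarith [hd b hb0]

lemma ConcaveOn.deriv_inverse_le {ψ : ℝ → ℝ} (hconc : ConcaveOn ℝ (Ici 0) φ)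
    (hder : ∀ t > 0, HasDerivAt φ (φ' t) t) (htop : Tendsto φ atTop atTop)
    (hψ : ∀ t ≥ 0, ψ (φ t) = t) {a r : ℝ} (ha : 0 < a) (hr : φ a < r) :
    φ' (ψ r) ≤ φ' a := by
  obtain ⟨s, has, rfl⟩ := intermediate_value_Ioi
    (fun t ht => (hder t (ha.trans_le ht)).continuousAt.continuousWithinAt) htop hr
  have hs : 0 < s := ha.trans has
  rw [hψ s hs.le, ← (hder s hs).deriv, ← (hder a ha).deriv]
  exact (hconc.subset Ioi_subset_Ici_self (convex_Ioi 0)).antitoneOn_deriv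
    (fun t ht => (hder t ht).differentiableAt) ha hs has.le

end Concave

noncomputable def clampToReal (μ : ℝ) (t : EReal) : ℝ := ((t ⊓ μ) ⊔ 0).toReal

section Clamp

variable {μ : ℝ}

lemma clamp_ne_bot (μ : ℝ) (t : EReal) : (t ⊓ μ) ⊔ 0 ≠ ⊥ :=
  ne_bot_of_le_ne_bot EReal.zero_ne_bot le_sup_right

lemma clamp_ne_top (μ : ℝ) (t : EReal) : (t ⊓ μ) ⊔ 0 ≠ ⊤ :=
  ((sup_le_sup_right inf_le_right 0).trans_lt (max_lt (EReal.coe_lt_top μ) EReal.zero_lt_top)).ne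

lemma clampToReal_nonneg (μ : ℝ) (t : EReal) : 0 ≤ clampToReal μ t :=
  EReal.toReal_nonneg le_sup_right

lemma monotone_clampToReal (μ : ℝ) : Monotone (clampToReal μ) := fun _ _ hst =>
  EReal.toReal_le_toReal (sup_le_sup_right (inf_le_inf_right _ hst) 0) (clamp_ne_bot _ _)
    (clamp_ne_top _ _)

lemma continuous_clampToReal (μ : ℝ) : Continuous (clampToReal μ) :=
  EReal.continuousOn_toReal.comp_continuous
    ((continuous_id.min continuous_const).max continuous_const)
    fun t => by simp

lemma coe_clampToReal {t : EReal} (h0 : 0 ≤ t) (hμ : t ≤ μ) :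
    (clampToReal μ t : EReal) = t := by
  rw [clampToReal, inf_eq_left.2 hμ, sup_eq_left.2 h0]
  exact EReal.coe_toReal (hμ.trans_lt (EReal.coe_lt_top μ)).ne
    (ne_bot_of_le_ne_bot EReal.zero_ne_bot h0)

lemma lt_of_clampToReal_lt (hμ : 0 ≤ μ) {t : EReal} (h : clampToReal μ t < μ) : t < μ := by
  by_contra! ht
  rw [clampToReal, inf_eq_right.2 ht, sup_eq_left.2 (EReal.coe_nonneg.2 hμ), EReal.toReal_coe] at h
  exact h.false

end Clamp

section ErrorBound

variable {X : Type*} [MetricSpace X] {f : X → EReal} {φ φ' : ℝ → ℝ}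

lemma LowerSemicontinuous.comp_clampToReal (hf : LowerSemicontinuous f) (μ : ℝ)
    (hmono : MonotoneOn φ (Ici 0)) (hcont : ∀ t > 0, ContinuousAt φ t) :
    LowerSemicontinuous fun u => φ (clampToReal μ (f u)) := by
  have hG : Monotone (φ ∘ clampToReal μ) := fun s t hst =>
    hmono (clampToReal_nonneg μ s) (clampToReal_nonneg μ t) (monotone_clampToReal μ hst)
  intro x
  rcases (clampToReal_nonneg μ (f x)).eq_or_lt with h0 | hpos
  · -- `φ (clampToReal μ (f x)) = φ 0` is the least value of `φ ∘ clampToReal μ`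
    exact fun c hc => Eventually.of_forall fun u => hc.trans_le
      (hmono (clampToReal_nonneg μ _) (clampToReal_nonneg μ _) (h0 ▸ clampToReal_nonneg μ _))
  · exact ((hcont _ hpos).comp (continuous_clampToReal μ).continuousAt).comp_lowerSemicontinuousAt
      (hf x) hG

lemma lslope_le_of_forall_le_add_mul_dist (hf : LowerSemicontinuous f)
    (hconc : ConcaveOn ℝ (Ici 0) φ) {F : X → ℝ} {y : X} {κ : ℝ} (hκ : 0 ≤ κ)
    (hy : 0 < f y)
    (hF : ∀ u, 0 < f u → f u ≤ f y → (F u : EReal) = f u)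
    (hder : HasDerivAt φ (φ' (F y)) (F y)) (hd : 0 < φ' (F y))
    (hmin : ∀ u, φ (F y) ≤ φ (F u) + κ * dist u y) :
    lslope f y ≤ ENNReal.ofReal (κ / φ' (F y)) := by
  refine lslope_le_of_eventually_le_add ?_
  filter_upwards [nhdsWithin_le_nhds (hf y 0 hy)] with u hu
  rcases le_or_gt (f y) (f u) with hyu | huy
  · exact hyu.trans (le_add_of_nonneg_right (EReal.coe_nonneg.2 (by positivity)))
  · have hFu := hF u hu huy.le
    rw [← hF y hy le_rfl, ← hFu] at huy ⊢
    rw [← hFu] at hu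
    norm_cast at hu huy ⊢
    have := hconc.mul_sub_le_sub_of_hasDerivAt hu.le (hu.trans huy).le huy hder
    rw [← sub_le_iff_le_add', div_mul_eq_mul_div, le_div_iff₀ hd]
    linarith [hmin u]

lemma ofReal_mul_lslope_lt_one (hf : LowerSemicontinuous f) {ψ : ℝ → ℝ}
    (hconc : ConcaveOn ℝ (Ici 0) φ) (hder : ∀ t > 0, HasDerivAt φ (φ' t) t)
    (hd : ∀ t > 0, 0 < φ' t) (htop : Tendsto φ atTop atTop) (hψ : ∀ t ≥ 0, ψ (φ t) = t)
    {F : X → ℝ} {y : X} {κ r : ℝ} (hκ : 0 ≤ κ) (hκ1 : κ < 1) (hy : 0 < f y)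
    (hF : ∀ u, 0 < f u → f u ≤ f y → (F u : EReal) = f u)
    (hmin : ∀ u, φ (F y) ≤ φ (F u) + κ * dist u y) (hr : φ (F y) < r) :
    ENNReal.ofReal (φ' (ψ r)) * lslope f y < 1 := by
  have hA : 0 < F y := by
    rw [← hF y hy le_rfl] at hy
    exact_mod_cast hy
  calc ENNReal.ofReal (φ' (ψ r)) * lslope f y
      ≤ ENNReal.ofReal (φ' (F y)) * ENNReal.ofReal (κ / φ' (F y)) := by
        gcongr
        · exact hconc.deriv_inverse_le hder htop hψ hA hr
        · exact lslope_le_of_forall_le_add_mul_dist hf hconc hκ hy hF (hder _ hA) (hd _ hA) hmin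
    _ = ENNReal.ofReal κ := by
        rw [← ENNReal.ofReal_mul (hd _ hA).le, mul_div_cancel₀ _ (hd _ hA).ne']
    _ < 1 := ENNReal.ofReal_lt_one.2 hκ1

end ErrorBound

theorem local_phi_error_bound_alternative_general {X : Type*} [MetricSpace X] [CompleteSpace X]
    (f : X → EReal) (hlsc : LowerSemicontinuous f)
    (xb : X) (hxb : f xb ≤ 0)
    (φ φ' ψ : ℝ → ℝ) (hφ00 : φ 0 = 0)
    (hder : ∀ t > (0 : ℝ), HasDerivAt φ (φ' t) t)
    (hd : ∀ t > (0 : ℝ), 0 < φ' t)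
    (htop : Filter.Tendsto φ Filter.atTop Filter.atTop)
    (hconc : ConcaveOn ℝ (Set.Ici (0 : ℝ)) φ)
    (hψ1 : ∀ t ≥ (0 : ℝ), ψ (φ t) = t)
    (h : ∃ δ > (0 : ℝ), ∃ μ > (0 : ℝ), ∀ x ∈ EMetric.ball xb (ENNReal.ofReal δ),
      0 < f x → f x < (μ : EReal) →
      1 ≤ ENNReal.ofReal (φ' (ψ (EMetric.infEdist x {v | f v ≤ 0}).toReal)) * lslope f x) :
    ∃ δ' > (0 : ℝ), ∃ μ' > (0 : ℝ), ∀ x ∈ EMetric.ball xb (ENNReal.ofReal δ'),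
      0 < f x → f x < (μ' : EReal) →
      EMetric.infEdist x {v | f v ≤ 0} ≤ ENNReal.ofReal (φ (f x).toReal) := by
  obtain ⟨δ, hδ, μ, hμ, hcrit⟩ := h
  have hmono := hconc.strictMonoOn_of_hasDerivAt_pos hder hd
  set F : X → ℝ := fun u => clampToReal μ (f u)
  have hF (u : X) (h0 : 0 < f u) (hμ' : f u < μ) : (F u : EReal) = f u :=
    coe_clampToReal h0.le hμ'.le
  have hg := hlsc.comp_clampToReal μ hmono.monotoneOn fun t ht => (hder t ht).continuousAt
  have hg0 (u : X) : 0 ≤ φ (F u) :=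
    hφ00 ▸ hmono.monotoneOn self_mem_Ici (clampToReal_nonneg μ _) (clampToReal_nonneg μ _)
  refine ⟨δ / 2, half_pos hδ, μ, hμ, fun x hx hx0 hxμ => ?_⟩
  have hxb : xb ∈ {v | f v ≤ 0} := hxb
  change infEDist x _ ≤ _
  rw [← ENNReal.ofReal_toReal (infEDist_ne_top ⟨xb, hxb⟩)]
  refine ENNReal.ofReal_le_ofReal (not_lt.1 fun hlt => ?_)
  rw [← hF x hx0 hxμ, EReal.toReal_coe] at hlt
  obtain ⟨y, hyx, hyx_close, hyd, κ, hκ, hκ1, hmin⟩ :=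
    exists_lt_infDist_of_lt_infDist hg hg0 hlt
  have hy_ball : y ∈ EMetric.ball xb (ENNReal.ofReal δ) := by
    have := infDist_le_dist_of_mem (x := x) hxb
    exact edist_lt_ofReal.2 (by linarith [hg0 y, dist_triangle y x xb, edist_lt_ofReal.1 hx])
  have hy0 : 0 < f y := not_le.1 fun hyS : y ∈ {v | f v ≤ 0} =>
    (hg0 y).not_gt (infDist_zero_of_mem hyS ▸ hyd)
  have hyμ : f y < μ := by
    have hFxμ : F x < μ := by exact_mod_cast (hF x hx0 hxμ).trans_lt hxμ
    exact lt_of_clampToReal_lt hμ.le (((hmono.le_iff_le (clampToReal_nonneg μ _)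
      (clampToReal_nonneg μ _)).1 hyx).trans_lt hFxμ)
  exact (hcrit y hy_ball hy0 hyμ).not_gt (ofReal_mul_lslope_lt_one hlsc hconc hder hd htop hψ1
    hκ hκ1 hy0 (fun u hu huy => hF u hu (huy.trans_lt hyμ)) hmin hyd)

/-- alternative sufficient condition for a local `φ`-error bound with a concave
`φ ∈ C¹`: if `φ'(φ⁻¹(d(x,[f≤0])))·|∇f|(x) ≥ 1` for all `x ∈ [f>0]` near `x̄` with `f(x)` near
`0`, then `f` admits a local `φ`-error bound at `x̄`.  The inverse of `φ` on `ℝ₊` is given by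
`ψ`. -/
theorem local_phi_error_bound_alternative {X : Type*} [MetricSpace X] [CompleteSpace X]
    (f : X → EReal) (hbot : ∀ u, f u ≠ ⊥) (hlsc : LowerSemicontinuous f)
    (xb : X) (hxb : f xb ≤ 0)
    (φ φ' ψ : ℝ → ℝ) (hφ00 : φ 0 = 0) (hφpos : ∀ t > (0 : ℝ), 0 < φ t)
    (hder : ∀ t > (0 : ℝ), HasDerivAt φ (φ' t) t)
    (hcont : ContinuousOn φ' (Set.Ioi (0 : ℝ))) (hd : ∀ t > (0 : ℝ), 0 < φ' t)
    (htop : Filter.Tendsto φ Filter.atTop Filter.atTop)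
    (hconc : ConcaveOn ℝ (Set.Ici (0 : ℝ)) φ)
    (hψ1 : ∀ t ≥ (0 : ℝ), ψ (φ t) = t) (hψ2 : ∀ t ≥ (0 : ℝ), φ (ψ t) = t)
    (h : ∃ δ > (0 : ℝ), ∃ μ > (0 : ℝ), ∀ x ∈ EMetric.ball xb (ENNReal.ofReal δ),
      0 < f x → f x < (μ : EReal) →
      1 ≤ ENNReal.ofReal (φ' (ψ (EMetric.infEdist x {v | f v ≤ 0}).toReal)) * lslope f x) :
    ∃ δ' > (0 : ℝ), ∃ μ' > (0 : ℝ), ∀ x ∈ EMetric.ball xb (ENNReal.ofReal δ'),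
      0 < f x → f x < (μ' : EReal) →
      EMetric.infEdist x {v | f v ≤ 0} ≤ ENNReal.ofReal (φ (f x).toReal) :=
  local_phi_error_bound_alternative_general f hlsc xb hxb φ φ' ψ hφ00 hder hd htop hconc hψ1 h
end
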